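/- arXiv:2006.11544 — 5 statements merged into one kernel-verified Lean document; each statement's English description precedes it below -/
import Mathlib

section
/- Let H ∈ (1/2, 1) and σ > 0. Define ρ : (0,∞) → ℝ by ρ(u) = σ² H (2H−1) ∫_{−∞}^{u} ∫_{−∞}^{0} e^{−(u − r₁ − r₂)} |r₁ − r₂|^{2H−2} dr₂ dr₁ (a convergent double integral). Then there exists a constant C > 0 such that for all u > 0, |ρ(u)| ≤ C · min(1, u^{2H−2}). -/
open MeasureTheory Real

section FOUAux

/-- Integrability of `x ↦ |r₁ - x| ^ α` on `(r₁ - 1, r₁]`. -/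
private lemma fou_hleft {α : ℝ} (hα1 : -1 < α) (r₁ : ℝ) :
    IntervalIntegrable (fun x : ℝ => |r₁ - x| ^ α) volume (r₁ - 1) r₁ := by
  have h := ((intervalIntegral.intervalIntegrable_rpow' (a := 0) (b := 1) hα1).comp_sub_left
    r₁).symm
  simp only [sub_zero, sub_sub_cancel] at h
  -- h : IntervalIntegrable (fun x => (r₁ - x) ^ α) volume (r₁ - 1) r₁
  rw [intervalIntegrable_iff] at h ⊢
  refine h.congr_fun ?_ measurableSet_uIoc
  intro x hx
  rw [Set.uIoc_of_le (by linarith : r₁ - 1 ≤ r₁)] at hx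
  show (r₁ - x) ^ α = |r₁ - x| ^ α
  rw [abs_of_nonneg (by linarith [hx.2] : (0:ℝ) ≤ r₁ - x)]

/-- Integrability of `x ↦ |r₁ - x| ^ α` on `(r₁, r₁ + 1]`. -/
private lemma fou_hright {α : ℝ} (hα1 : -1 < α) (r₁ : ℝ) :
    IntervalIntegrable (fun x : ℝ => |r₁ - x| ^ α) volume r₁ (r₁ + 1) := by
  have h := (intervalIntegral.intervalIntegrable_rpow' (a := 0) (b := 1) hα1).comp_sub_right r₁
  simp only [zero_add] at h
  rw [add_comm 1 r₁] at h
  rw [intervalIntegrable_iff] at h ⊢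
  refine h.congr_fun ?_ measurableSet_uIoc
  intro x hx
  rw [Set.uIoc_of_le (by linarith : r₁ ≤ r₁ + 1)] at hx
  show (x - r₁) ^ α = |r₁ - x| ^ α
  rw [abs_sub_comm, abs_of_nonneg (by linarith [hx.1] : (0:ℝ) ≤ x - r₁)]

private lemma fou_vleft {α : ℝ} (hα1 : -1 < α) (r₁ : ℝ) :
    ∫ x in (r₁ - 1)..r₁, |r₁ - x| ^ α = 1 / (α + 1) := by
  have hcongr : Set.EqOn (fun x : ℝ => |r₁ - x| ^ α) (fun x : ℝ => (r₁ - x) ^ α)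
      (Set.uIcc (r₁ - 1) r₁) := by
    intro x hx
    rw [Set.uIcc_of_le (by linarith : r₁ - 1 ≤ r₁)] at hx
    simp only
    rw [abs_of_nonneg (by linarith [hx.2] : (0:ℝ) ≤ r₁ - x)]
  rw [intervalIntegral.integral_congr hcongr,
    intervalIntegral.integral_comp_sub_left (fun t : ℝ => t ^ α) r₁]
  simp only [sub_self, sub_sub_cancel]
  rw [integral_rpow (Or.inl hα1)]
  rw [Real.one_rpow, Real.zero_rpow (by linarith : α + 1 ≠ 0)]
  ring

private lemma fou_vright {α : ℝ} (hα1 : -1 < α) (r₁ : ℝ) :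
    ∫ x in r₁..(r₁ + 1), |r₁ - x| ^ α = 1 / (α + 1) := by
  have hcongr : Set.EqOn (fun x : ℝ => |r₁ - x| ^ α) (fun x : ℝ => (x - r₁) ^ α)
      (Set.uIcc r₁ (r₁ + 1)) := by
    intro x hx
    rw [Set.uIcc_of_le (by linarith : r₁ ≤ r₁ + 1)] at hx
    simp only
    rw [abs_sub_comm, abs_of_nonneg (by linarith [hx.1] : (0:ℝ) ≤ x - r₁)]
  rw [intervalIntegral.integral_congr hcongr,
    intervalIntegral.integral_comp_sub_right (fun t : ℝ => t ^ α) r₁]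
  simp only [sub_self, add_sub_cancel_left]
  rw [integral_rpow (Or.inl hα1)]
  rw [Real.one_rpow, Real.zero_rpow (by linarith : α + 1 ≠ 0)]
  ring

/-- Uniform bound for the inner convolution integral. -/
private lemma fou_g_le_M {α : ℝ} (hα1 : -1 < α) (hα0 : α < 0) (r₁ : ℝ) :
    (∫ r₂ in Set.Iic (0:ℝ), Real.exp r₂ * |r₁ - r₂| ^ α) ≤ 2 / (α + 1) + 1 := by
  set ψ : ℝ → ℝ := (Set.Ioo (r₁ - 1) (r₁ + 1)).indicator (fun x => |r₁ - x| ^ α) with hψ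
  have hII : IntervalIntegrable (fun x : ℝ => |r₁ - x| ^ α) volume (r₁ - 1) (r₁ + 1) :=
    (fou_hleft hα1 r₁).trans (fou_hright hα1 r₁)
  have hIOO : IntegrableOn (fun x : ℝ => |r₁ - x| ^ α) (Set.Ioo (r₁ - 1) (r₁ + 1)) volume := by
    rw [intervalIntegrable_iff_integrableOn_Ioo_of_le (by linarith)] at hII
    exact hII
  have hψint : Integrable ψ volume := by
    rw [hψ, integrable_indicator_iff measurableSet_Ioo]
    exact hIOO
  have hψ0 : ∀ x, 0 ≤ ψ x := fun x =>
    Set.indicator_nonneg (fun y _ => Real.rpow_nonneg (abs_nonneg _) _) x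
  have hdom : Integrable (fun r₂ => Real.exp r₂ + ψ r₂) (volume.restrict (Set.Iic (0:ℝ))) :=
    (integrableOn_exp_Iic 0).add hψint.integrableOn
  have hmono : ∀ᵐ r₂ ∂volume.restrict (Set.Iic (0:ℝ)),
      Real.exp r₂ * |r₁ - r₂| ^ α ≤ Real.exp r₂ + ψ r₂ := by
    rw [ae_restrict_iff' measurableSet_Iic]
    filter_upwards with r₂ hr₂
    rcases le_or_gt 1 |r₁ - r₂| with h | h
    · have h1 : |r₁ - r₂| ^ α ≤ 1 := Real.rpow_le_one_of_one_le_of_nonpos h hα0.le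
      calc Real.exp r₂ * |r₁ - r₂| ^ α ≤ Real.exp r₂ * 1 :=
            mul_le_mul_of_nonneg_left h1 (Real.exp_nonneg _)
        _ = Real.exp r₂ := mul_one _
        _ ≤ Real.exp r₂ + ψ r₂ := le_add_of_nonneg_right (hψ0 _)
    · have hmem : r₂ ∈ Set.Ioo (r₁ - 1) (r₁ + 1) := by
        rw [abs_sub_lt_iff] at h
        constructor <;> [linarith [h.1]; linarith [h.2]]
      have hψval : ψ r₂ = |r₁ - r₂| ^ α := Set.indicator_of_mem hmem _
      have hexp1 : Real.exp r₂ ≤ 1 := by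
        calc Real.exp r₂ ≤ Real.exp 0 := Real.exp_le_exp.mpr (by exact hr₂)
          _ = 1 := Real.exp_zero
      calc Real.exp r₂ * |r₁ - r₂| ^ α ≤ 1 * |r₁ - r₂| ^ α :=
            mul_le_mul_of_nonneg_right hexp1 (Real.rpow_nonneg (abs_nonneg _) _)
        _ = ψ r₂ := by rw [one_mul, hψval]
        _ ≤ Real.exp r₂ + ψ r₂ := le_add_of_nonneg_left (Real.exp_nonneg _)
  have h0 : 0 ≤ᵐ[volume.restrict (Set.Iic (0:ℝ))]
      fun r₂ => Real.exp r₂ * |r₁ - r₂| ^ α :=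
    Filter.Eventually.of_forall fun r₂ =>
      mul_nonneg (Real.exp_nonneg _) (Real.rpow_nonneg (abs_nonneg _) _)
  have hψval : ∫ x, ψ x = 2 / (α + 1) := by
    rw [hψ, integral_indicator measurableSet_Ioo, ← integral_Ioc_eq_integral_Ioo,
      ← intervalIntegral.integral_of_le (by linarith : r₁ - 1 ≤ r₁ + 1),
      ← intervalIntegral.integral_add_adjacent_intervals (fou_hleft hα1 r₁) (fou_hright hα1 r₁),
      fou_vleft hα1 r₁, fou_vright hα1 r₁]
    ring
  calc (∫ r₂ in Set.Iic (0:ℝ), Real.exp r₂ * |r₁ - r₂| ^ α)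
      ≤ ∫ r₂ in Set.Iic (0:ℝ), (Real.exp r₂ + ψ r₂) :=
        integral_mono_of_nonneg h0 hdom hmono
    _ = (∫ r₂ in Set.Iic (0:ℝ), Real.exp r₂) + ∫ r₂ in Set.Iic (0:ℝ), ψ r₂ :=
        integral_add (integrableOn_exp_Iic 0) hψint.integrableOn
    _ ≤ 1 + ∫ x, ψ x := by
        rw [integral_exp_Iic_zero]
        gcongr
        exact Filter.Eventually.of_forall hψ0
        exact Measure.restrict_le_self
    _ = 2 / (α + 1) + 1 := by rw [hψval]; ring

/-- Decay bound for the inner convolution integral when `r₁ > 0`. -/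
private lemma fou_g_le_rpow {α : ℝ} (hα0 : α < 0) {r₁ : ℝ} (h : 0 < r₁) :
    (∫ r₂ in Set.Iic (0:ℝ), Real.exp r₂ * |r₁ - r₂| ^ α) ≤ r₁ ^ α := by
  have hint : Integrable (fun r₂ => Real.exp r₂ * r₁ ^ α)
      (volume.restrict (Set.Iic (0:ℝ))) := (integrableOn_exp_Iic 0).mul_const _
  have hmono : ∀ᵐ r₂ ∂volume.restrict (Set.Iic (0:ℝ)),
      Real.exp r₂ * |r₁ - r₂| ^ α ≤ Real.exp r₂ * r₁ ^ α := by
    rw [ae_restrict_iff' measurableSet_Iic]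
    filter_upwards with r₂ hr₂
    have h1 : |r₁ - r₂| = r₁ - r₂ := abs_of_pos (by simp at hr₂; linarith)
    have h2 : (r₁ - r₂) ^ α ≤ r₁ ^ α :=
      Real.rpow_le_rpow_of_nonpos h (by simp at hr₂; linarith) hα0.le
    rw [h1]
    exact mul_le_mul_of_nonneg_left h2 (Real.exp_nonneg _)
  have h0 : 0 ≤ᵐ[volume.restrict (Set.Iic (0:ℝ))]
      fun r₂ => Real.exp r₂ * |r₁ - r₂| ^ α :=
    Filter.Eventually.of_forall fun r₂ =>
      mul_nonneg (Real.exp_nonneg _) (Real.rpow_nonneg (abs_nonneg _) _)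
  calc (∫ r₂ in Set.Iic (0:ℝ), Real.exp r₂ * |r₁ - r₂| ^ α)
      ≤ ∫ r₂ in Set.Iic (0:ℝ), Real.exp r₂ * r₁ ^ α :=
        integral_mono_of_nonneg h0 hint hmono
    _ = (∫ r₂ in Set.Iic (0:ℝ), Real.exp r₂) * r₁ ^ α := integral_mul_const _ _
    _ = r₁ ^ α := by rw [integral_exp_Iic_zero, one_mul]

end FOUAux

/-- Decay of the autocorrelation function of the stationary fractional
Ornstein–Uhlenbeck process: `|ρ(u)| ≤ C min(1, u^{2H−2})` for all `u > 0`. -/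
theorem fOU_correlation_decay
    (H σ : ℝ) (hH : H ∈ Set.Ioo (1/2 : ℝ) 1) (hσ : 0 < σ) (ρ : ℝ → ℝ)
    (hρ : ∀ u, 0 < u → ρ u =
      σ^2 * H * (2*H - 1) *
        ∫ r₁ in Set.Iic u, (∫ r₂ in Set.Iic (0:ℝ),
          Real.exp (-(u - r₁ - r₂)) * |r₁ - r₂| ^ (2*H - 2))) :
    ∃ C > 0, ∀ u, 0 < u → |ρ u| ≤ C * min 1 (u ^ (2*H - 2)) := by
  obtain ⟨hH1, hH2⟩ := hH
  set α : ℝ := 2*H - 2 with hαdef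
  have hα1 : -1 < α := by rw [hαdef]; linarith
  have hα0 : α < 0 := by rw [hαdef]; linarith
  set c : ℝ := σ^2 * H * (2*H - 1) with hc
  have hcpos : 0 < c :=
    mul_pos (mul_pos (pow_pos hσ 2) (by linarith)) (by linarith)
  set M : ℝ := 2 / (α + 1) + 1 with hM
  have hMpos : 0 < M := by
    have h1 : 0 < 2 / (α + 1) := div_pos two_pos (by linarith)
    rw [hM]
    linarith
  set g : ℝ → ℝ := fun r => ∫ r₂ in Set.Iic (0:ℝ), Real.exp r₂ * |r - r₂| ^ α with hg
  have hg0 : ∀ r, 0 ≤ g r := fun r =>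
    setIntegral_nonneg measurableSet_Iic fun x _ =>
      mul_nonneg (Real.exp_nonneg _) (Real.rpow_nonneg (abs_nonneg _) _)
  have hgM : ∀ r, g r ≤ M := fun r => fou_g_le_M hα1 hα0 r
  refine ⟨c * (M + 2), by positivity, fun u hu => ?_⟩
  -- rewrite the double integral
  have hFg : ∀ r₁ : ℝ, (∫ r₂ in Set.Iic (0:ℝ),
      Real.exp (-(u - r₁ - r₂)) * |r₁ - r₂| ^ α) = Real.exp (r₁ - u) * g r₁ := by
    intro r₁
    rw [hg, ← integral_const_mul]
    congr 1
    funext r₂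
    rw [show -(u - r₁ - r₂) = (r₁ - u) + r₂ by ring, Real.exp_add]
    ring
  set I : ℝ := ∫ r₁ in Set.Iic u, Real.exp (r₁ - u) * g r₁ with hI
  have hρI : ρ u = c * I := by
    rw [hρ u hu, hI]
    congr 1
    exact integral_congr_ae (Filter.Eventually.of_forall hFg)
  have hF0 : ∀ r₁ : ℝ, 0 ≤ Real.exp (r₁ - u) * g r₁ := fun r₁ =>
    mul_nonneg (Real.exp_nonneg _) (hg0 _)
  have hI0 : 0 ≤ I :=
    setIntegral_nonneg measurableSet_Iic fun x _ => hF0 x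
  -- basic exponential integral facts
  have hexpint : ∀ v : ℝ, IntegrableOn (fun x : ℝ => Real.exp (x - u)) (Set.Iic v) volume := by
    intro v
    have : (fun x : ℝ => Real.exp (x - u)) = fun x => Real.exp x * (Real.exp u)⁻¹ := by
      funext x
      rw [Real.exp_sub, div_eq_mul_inv]
    rw [this]
    exact (integrableOn_exp_Iic v).mul_const _
  have hexpval : ∀ v : ℝ, ∫ x in Set.Iic v, Real.exp (x - u) = Real.exp (v - u) := by
    intro v
    have h1 : (fun x : ℝ => Real.exp (x - u)) = fun x => Real.exp x * (Real.exp u)⁻¹ := by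
      funext x
      rw [Real.exp_sub, div_eq_mul_inv]
    rw [h1, integral_mul_const, integral_exp_Iic, Real.exp_sub, div_eq_mul_inv]
  -- Bound A : I ≤ M
  have hIA : I ≤ M := by
    have hint : Integrable (fun r₁ : ℝ => Real.exp (r₁ - u) * M)
        (volume.restrict (Set.Iic u)) := (hexpint u).mul_const _
    calc I ≤ ∫ r₁ in Set.Iic u, Real.exp (r₁ - u) * M :=
          integral_mono_of_nonneg (Filter.Eventually.of_forall hF0) hint
            (Filter.Eventually.of_forall fun r₁ =>
              mul_le_mul_of_nonneg_left (hgM r₁) (Real.exp_nonneg _))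
      _ = (∫ r₁ in Set.Iic u, Real.exp (r₁ - u)) * M := integral_mul_const _ _
      _ = Real.exp (u - u) * M := by rw [hexpval u]
      _ = M := by rw [sub_self, Real.exp_zero, one_mul]
  -- Bound B : for u ≥ 1, I ≤ (M + 2) * u ^ α
  have hIB : 1 ≤ u → I ≤ (M + 2) * u ^ α := by
    intro hu1
    set D : ℝ → ℝ := fun r₁ =>
      (Set.Iic (u/2)).indicator (fun x => Real.exp (x - u) * M) r₁
        + Real.exp (r₁ - u) * (u/2) ^ α with hD
    have hDint1 : Integrable ((Set.Iic (u/2)).indicator (fun x => Real.exp (x - u) * M))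
        (volume.restrict (Set.Iic u)) :=
      ((hexpint u).mul_const M).indicator measurableSet_Iic
    have hDint2 : Integrable (fun r₁ : ℝ => Real.exp (r₁ - u) * (u/2) ^ α)
        (volume.restrict (Set.Iic u)) := (hexpint u).mul_const _
    have hDint : Integrable D (volume.restrict (Set.Iic u)) := hDint1.add hDint2
    have hmono : ∀ r₁ : ℝ, Real.exp (r₁ - u) * g r₁ ≤ D r₁ := by
      intro r₁
      rcases le_or_gt r₁ (u/2) with h | h
      · have hind : (Set.Iic (u/2)).indicator (fun x => Real.exp (x - u) * M) r₁
            = Real.exp (r₁ - u) * M := Set.indicator_of_mem (Set.mem_Iic.mpr h) _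
        rw [hD]
        simp only [hind]
        have h2 : Real.exp (r₁ - u) * g r₁ ≤ Real.exp (r₁ - u) * M :=
          mul_le_mul_of_nonneg_left (hgM r₁) (Real.exp_nonneg _)
        have h3 : 0 ≤ Real.exp (r₁ - u) * (u/2) ^ α :=
          mul_nonneg (Real.exp_nonneg _) (Real.rpow_nonneg (by linarith) _)
        exact h2.trans (le_add_of_nonneg_right h3)
      · have hind : (Set.Iic (u/2)).indicator (fun x => Real.exp (x - u) * M) r₁ = 0 :=
          Set.indicator_of_notMem (by simpa using h) _
        rw [hD]
        simp only [hind, zero_add]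
        have hgr : g r₁ ≤ (u/2) ^ α := by
          calc g r₁ ≤ r₁ ^ α := fou_g_le_rpow hα0 (by linarith)
            _ ≤ (u/2) ^ α := Real.rpow_le_rpow_of_nonpos (by linarith) h.le hα0.le
        exact mul_le_mul_of_nonneg_left hgr (Real.exp_nonneg _)
    have hval1 : ∫ r₁ in Set.Iic u,
        (Set.Iic (u/2)).indicator (fun x => Real.exp (x - u) * M) r₁
        = Real.exp (u/2 - u) * M := by
      rw [setIntegral_indicator measurableSet_Iic,
        show Set.Iic u ∩ Set.Iic (u/2) = Set.Iic (u/2) by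
          rw [Set.Iic_inter_Iic, min_eq_right (by linarith : u/2 ≤ u)],
        integral_mul_const, hexpval (u/2)]
    have hval2 : ∫ r₁ in Set.Iic u, Real.exp (r₁ - u) * (u/2) ^ α = (u/2) ^ α := by
      rw [integral_mul_const, hexpval u, sub_self, Real.exp_zero, one_mul]
    have hIleD : I ≤ Real.exp (u/2 - u) * M + (u/2) ^ α := by
      calc I ≤ ∫ r₁ in Set.Iic u, D r₁ :=
            integral_mono_of_nonneg (Filter.Eventually.of_forall hF0) hDint
              (Filter.Eventually.of_forall hmono)
        _ = (∫ r₁ in Set.Iic u,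
              (Set.Iic (u/2)).indicator (fun x => Real.exp (x - u) * M) r₁)
            + ∫ r₁ in Set.Iic u, Real.exp (r₁ - u) * (u/2) ^ α :=
            integral_add hDint1 hDint2
        _ = Real.exp (u/2 - u) * M + (u/2) ^ α := by rw [hval1, hval2]
    -- exp (u/2 - u) = exp (-(u/2)) ≤ u⁻¹ ≤ u ^ α
    have hexple : Real.exp (u/2 - u) ≤ u ^ α := by
      have h1 : u ≤ Real.exp (u/2) := by
        have e1 : u/4 + 1 ≤ Real.exp (u/4) := Real.add_one_le_exp _
        have e2 : Real.exp (u/4) * Real.exp (u/4) = Real.exp (u/2) := by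
          rw [← Real.exp_add]; ring_nf
        nlinarith [Real.exp_nonneg (u/4), sq_nonneg (u/4 - 1), e1, e2]
      have h2 : Real.exp (u/2 - u) ≤ u⁻¹ := by
        rw [show u/2 - u = -(u/2) by ring, Real.exp_neg]
        exact inv_anti₀ hu h1
      have h3 : u⁻¹ ≤ u ^ α := by
        rw [← Real.rpow_neg_one u]
        exact Real.rpow_le_rpow_of_exponent_le hu1 (by linarith)
      linarith
    have hhalf : (u/2) ^ α ≤ 2 * u ^ α := by
      have hd : (u/2) ^ α = u ^ α / 2 ^ α := Real.div_rpow hu.le (by norm_num : (0:ℝ) ≤ 2) α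
      have h2α : (2:ℝ)⁻¹ ≤ (2:ℝ) ^ α := by
        rw [← Real.rpow_neg_one 2]
        exact Real.rpow_le_rpow_of_exponent_le one_le_two (by linarith)
      have h2αpos : (0:ℝ) < (2:ℝ) ^ α := Real.rpow_pos_of_pos two_pos _
      have huα : (0:ℝ) ≤ u ^ α := Real.rpow_nonneg hu.le _
      rw [hd, div_le_iff₀ h2αpos]
      nlinarith
    have huα : (0:ℝ) ≤ u ^ α := Real.rpow_nonneg hu.le _
    calc I ≤ Real.exp (u/2 - u) * M + (u/2) ^ α := hIleD
      _ ≤ u ^ α * M + 2 * u ^ α := by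
          have := mul_le_mul_of_nonneg_right hexple hMpos.le
          linarith
      _ = (M + 2) * u ^ α := by ring
  -- conclude
  rw [hρI, abs_of_nonneg (mul_nonneg hcpos.le hI0)]
  rcases le_total u 1 with hu1 | hu1
  · have hmin : min 1 (u ^ α) = 1 := by
      rw [min_eq_left]
      exact Real.one_le_rpow_of_pos_of_le_one_of_nonpos hu hu1 hα0.le
    rw [hmin, mul_one]
    have : I ≤ M + 2 := by linarith
    exact mul_le_mul_of_nonneg_left this hcpos.le
  · have hmin : min 1 (u ^ α) = u ^ α := by
      rw [min_eq_right]
      exact Real.rpow_le_one_of_one_le_of_nonpos hu1 hα0.le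
    rw [hmin]
    calc c * I ≤ c * ((M + 2) * u ^ α) :=
          mul_le_mul_of_nonneg_left (hIB hu1) hcpos.le
      _ = c * (M + 2) * u ^ α := by ring
end

section
/- Let t > 0, let ρ : ℝ → ℝ be measurable, let r ≥ 1, let s₁, …, s_r ∈ [0, t], and let n₁, …, n_r be natural numbers with n₁ + … + n_r = k ≥ 1. Then ∫₀^t ∏_{q=1}^{r} |ρ(s − s_q)|^{n_q} ds ≤ ∫_{−t}^{t} |ρ(u)|^{k} du, where both sides are interpreted in [0, ∞] (Lebesgue integrals of nonnegative functions). -/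
set_option maxHeartbeats 800000

open MeasureTheory ENNReal

lemma translate_lintegral (g : ℝ → ℝ≥0∞) (hg : Measurable g) (c t : ℝ) :
    (∫⁻ x in Set.Icc (0:ℝ) t, g (x - c)) = ∫⁻ y in Set.Icc (-c) (t - c), g y := by
  have hmap : Measure.map (· - c) (volume : Measure ℝ) = volume := by
    simpa [sub_eq_add_neg] using map_add_right_eq_self (volume : Measure ℝ) (-c)
  have this := setLIntegral_map (μ := (volume : Measure ℝ)) (s := Set.Icc (-c) (t - c))
    (f := g) (g := fun x => x - c) measurableSet_Icc hg (measurable_id.sub_const c)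
  rw [hmap] at this
  have hpre : (fun x => x - c) ⁻¹' Set.Icc (-c) (t - c) = Set.Icc (0:ℝ) t := by
    ext x
    simp only [Set.mem_preimage, Set.mem_Icc]
    constructor <;> intro h <;> constructor <;> linarith [h.1, h.2]
  rw [hpre] at this
  exact this.symm

lemma prod_rpow_sum_aux {ι : Type*} (x : ℝ≥0∞) (hx0 : x ≠ 0) (hxt : x ≠ ⊤)
    (s : Finset ι) (p : ι → ℝ) : ∏ i ∈ s, x ^ p i = x ^ (∑ i ∈ s, p i) := by
  classical
  induction s using Finset.induction with
  | empty => simp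
  | insert _ _ hq ih =>
    rw [Finset.prod_insert hq, Finset.sum_insert hq, ENNReal.rpow_add _ _ hx0 hxt, ih]

/-- The single-variable "peeling" estimate: for `s₁, …, s_r ∈ [0,t]` and naturals
`n₁ + … + n_r = k ≥ 1`,
`∫₀ᵗ ∏_q |ρ(s − s_q)|^{n_q} ds ≤ ∫_{−t}^t |ρ(u)|^k du` in `[0,∞]`. -/
theorem peeling_estimate
    (t : ℝ) (ht : 0 < t) (ρ : ℝ → ℝ) (hρ : Measurable ρ)
    (r : ℕ) (hr : 1 ≤ r) (s : Fin r → ℝ) (hs : ∀ q, s q ∈ Set.Icc (0:ℝ) t)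
    (n : Fin r → ℕ) (k : ℕ) (hk : ∑ q, n q = k) (hk1 : 1 ≤ k) :
    (∫⁻ x in Set.Icc (0:ℝ) t, ∏ q, (ENNReal.ofReal |ρ (x - s q)|) ^ (n q)) ≤
      ∫⁻ u in Set.Icc (-t) t, (ENNReal.ofReal |ρ u|) ^ k := by
  classical
  set I : ℝ≥0∞ := ∫⁻ u in Set.Icc (-t) t, (ENNReal.ofReal |ρ u|) ^ k with hI
  have hk0 : (k : ℝ) ≠ 0 := by positivity
  set p : Fin r → ℝ := fun q => (n q : ℝ) / k with hp
  have hpsum : ∑ q, p q = 1 := by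
    simp only [hp]
    rw [← Finset.sum_div]
    rw [show ∑ q, (n q : ℝ) = (k : ℝ) by rw [← Nat.cast_sum, hk]]
    field_simp
  have hpnn : ∀ q ∈ Finset.univ, (0:ℝ) ≤ p q := fun q _ => by positivity
  -- rewrite the integrand
  have hrw : ∀ x : ℝ, (∏ q, (ENNReal.ofReal |ρ (x - s q)|) ^ (n q))
      = ∏ q, ((ENNReal.ofReal |ρ (x - s q)|) ^ (k : ℕ) : ℝ≥0∞) ^ (p q) := by
    intro x
    refine Finset.prod_congr rfl fun q _ => ?_
    rw [← ENNReal.rpow_natCast _ k, ← ENNReal.rpow_mul, ← ENNReal.rpow_natCast _ (n q)]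
    congr 1
    simp only [hp]; field_simp
  simp only [hrw]
  -- Hölder
  have hmeas : ∀ q ∈ Finset.univ, AEMeasurable
      (fun x : ℝ => ((ENNReal.ofReal |ρ (x - s q)|) ^ (k:ℕ) : ℝ≥0∞))
      ((volume : Measure ℝ).restrict (Set.Icc 0 t)) := by
    intro q _
    exact (((hρ.comp (measurable_id.sub_const (s q))).abs.ennreal_ofReal).pow_const k).aemeasurable
  calc (∫⁻ x in Set.Icc (0:ℝ) t, ∏ q, ((ENNReal.ofReal |ρ (x - s q)|) ^ (k:ℕ) : ℝ≥0∞) ^ p q)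
      ≤ ∏ q, (∫⁻ x in Set.Icc (0:ℝ) t, ((ENNReal.ofReal |ρ (x - s q)|) ^ (k:ℕ) : ℝ≥0∞)) ^ p q :=
        ENNReal.lintegral_prod_norm_pow_le _ hmeas hpsum hpnn
    _ ≤ ∏ q, I ^ p q := by
        refine Finset.prod_le_prod' fun q _ => ?_
        refine ENNReal.rpow_le_rpow ?_ (hpnn q (Finset.mem_univ q))
        have htr := translate_lintegral (fun u => (ENNReal.ofReal |ρ u|) ^ (k:ℕ))
          (hρ.abs.ennreal_ofReal.pow_const k) (s q) t
        rw [htr]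
        refine lintegral_mono_set ?_
        have h1 := (hs q).1; have h2 := (hs q).2
        exact Set.Icc_subset_Icc (by linarith) (by linarith)
    _ ≤ I := by
        rcases eq_or_ne I ⊤ with h | h
        · simp [h]
        rcases eq_or_ne I 0 with h0 | h0
        · -- some q has n q ≥ 1 hence p q > 0, so product = 0
          obtain ⟨q, hq⟩ : ∃ q, n q ≠ 0 := by
            by_contra hc
            push_neg at hc
            simp [hc] at hk
            omega
          have hpq : 0 < p q := by
            have : (0:ℝ) < (n q : ℝ) := by exact_mod_cast Nat.pos_of_ne_zero hq
            positivity
          rw [h0]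
          refine le_of_eq ?_
          apply Finset.prod_eq_zero (Finset.mem_univ q)
          simp [ENNReal.zero_rpow_of_pos hpq]
        · rw [prod_rpow_sum_aux I h0 h, hpsum, ENNReal.rpow_one]
end

section
/- Let p ≥ 1 be an integer, t > 0, and ρ : ℝ → ℝ measurable. Let n(q, l), for 1 ≤ q, l ≤ 2p, be natural numbers satisfying n(q, l) = n(l, q) and n(q, q) = 0, and set k_l = Σ_{q=1}^{2p} n(l, q). Assume k_l ≥ 1 and ∫_{−t}^{t} |ρ(s)|^{k_l} ds < ∞ for every l. Then ∫_{[0,t]^{2p}} ∏_{1 ≤ q < l ≤ 2p} |ρ(s_l − s_q)|^{n(q,l)} ds₁ ⋯ ds_{2p} ≤ ∏_{l=1}^{2p} ( 2t ∫_{−t}^{t} |ρ(s)|^{k_l} ds )^{1/2}. -/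
open MeasureTheory Finset Set
open scoped ENNReal

namespace GraphEstimate

variable {N : ℕ}

noncomputable def R (ρ : ℝ → ℝ) (u : ℝ) : ℝ≥0∞ := ENNReal.ofReal |ρ u|

noncomputable def A (ρ : ℝ → ℝ) (t : ℝ) (m : ℕ) : ℝ≥0∞ :=
  ∫⁻ u in Set.Icc (-t) t, R ρ u ^ m

noncomputable def Ind (t u : ℝ) : ℝ≥0∞ := Set.indicator (Set.Icc 0 t) (fun _ => (1:ℝ≥0∞)) u

noncomputable def Phi (ρ : ℝ → ℝ) (n : Fin N → Fin N → ℕ) (S : Finset (Fin N))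
    (x : Fin N → ℝ) : ℝ≥0∞ :=
  ∏ q ∈ S, ∏ l ∈ S, if q < l then R ρ (x l - x q) ^ n q l else 1

noncomputable def FF (ρ : ℝ → ℝ) (t : ℝ) (n : Fin N → Fin N → ℕ) (S : Finset (Fin N))
    (x : Fin N → ℝ) : ℝ≥0∞ :=
  (∏ l ∈ S, Ind t (x l)) * Phi ρ n S x

def key (k : Fin N → ℕ) (l : Fin N) : ℕ := k l * N + l

noncomputable def wgt (n : Fin N → Fin N → ℕ) (k : Fin N → ℕ) (S : Finset (Fin N))
    (l : Fin N) : ℝ :=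
  ∑ q ∈ S, if key k l < key k q then (n q l : ℝ) * (1/(2*k l) + 1/(2*k q)) else 0

def Dd (n : Fin N → Fin N → ℕ) (S : Finset (Fin N)) (l : Fin N) : ℕ := ∑ q ∈ S, n q l

noncomputable def cst (ρ : ℝ → ℝ) (t : ℝ) (n : Fin N → Fin N → ℕ) (k : Fin N → ℕ)
    (S : Finset (Fin N)) (l : Fin N) : ℝ≥0∞ :=
  (ENNReal.ofReal t) ^ (1 - wgt n k S l) * A ρ t (k l) ^ ((Dd n S l : ℝ)/(2 * k l))

lemma key_inj (k : Fin N → ℕ) : Function.Injective (key k) := by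
  intro a b h
  have ha : (a : ℕ) < N := a.isLt
  have hb : (b : ℕ) < N := b.isLt
  have e : (a:ℕ) + k a * N = (b:ℕ) + k b * N := by
    simp only [key] at h; omega
  have h1 : ((a:ℕ) + k a * N) % N = ((b:ℕ) + k b * N) % N := by rw [e]
  rw [Nat.add_mul_mod_self_right, Nat.add_mul_mod_self_right,
    Nat.mod_eq_of_lt ha, Nat.mod_eq_of_lt hb] at h1
  exact Fin.ext h1

lemma k_le_of_key_le {k : Fin N → ℕ} {a b : Fin N} (h : key k a ≤ key k b) : k a ≤ k b := by
  by_contra hlt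
  push_neg at hlt
  have hb : (b : ℕ) < N := b.isLt
  have : key k b < key k a := by
    calc k b * N + (b:ℕ) < k b * N + N := by omega
    _ = (k b + 1) * N := by ring
    _ ≤ k a * N := Nat.mul_le_mul_right N hlt
    _ ≤ k a * N + (a:ℕ) := Nat.le_add_right _ _
  omega

lemma measurable_R {ρ : ℝ → ℝ} (hρ : Measurable ρ) : Measurable (R ρ) :=
  ENNReal.measurable_ofReal.comp hρ.abs

lemma measurable_Ind {t : ℝ} : Measurable (Ind t) :=
  measurable_const.indicator measurableSet_Icc

lemma measurable_Phi {ρ : ℝ → ℝ} (hρ : Measurable ρ) (n : Fin N → Fin N → ℕ)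
    (S : Finset (Fin N)) : Measurable (Phi ρ n S) := by
  apply Finset.measurable_prod
  intro q _
  apply Finset.measurable_prod
  intro l _
  by_cases h : q < l
  · simp only [if_pos h]
    exact ((measurable_R hρ).comp ((measurable_pi_apply l).sub (measurable_pi_apply q))).pow_const _
  · simp only [if_neg h]; exact measurable_const

lemma measurable_FF {ρ : ℝ → ℝ} (hρ : Measurable ρ) (t : ℝ) (n : Fin N → Fin N → ℕ)
    (S : Finset (Fin N)) : Measurable (FF ρ t n S) := by
  apply Measurable.mul ?_ (measurable_Phi hρ n S)
  exact Finset.measurable_prod _ fun l _ => measurable_Ind.comp (measurable_pi_apply l)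

lemma prod_rpow_eq {ι : Type*} (x : ℝ≥0∞) (s : Finset ι) (e : ι → ℝ)
    (he : ∀ i ∈ s, 0 ≤ e i) :
    ∏ i ∈ s, x ^ e i = x ^ (∑ i ∈ s, e i) := by
  classical
  induction s using Finset.induction with
  | empty => simp
  | insert _ _ hi =>
    rename_i a s' ih
    rw [Finset.prod_insert hi, Finset.sum_insert hi, ih (fun i h => he i (Finset.mem_insert_of_mem h)),
      ENNReal.rpow_add_of_nonneg _ _ (he a (Finset.mem_insert_self a s'))
        (Finset.sum_nonneg fun i h => he i (Finset.mem_insert_of_mem h))]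

lemma lint_shift_le {ρ : ℝ → ℝ} (hρ : Measurable ρ) {t c : ℝ} (hc : c ∈ Icc (0:ℝ) t) (m : ℕ) :
    ∫⁻ y in Icc (0:ℝ) t, R ρ (c - y) ^ m ≤ A ρ t m := by
  have hH : Measurable fun u => R ρ u ^ m := (measurable_R hρ).pow_const m
  have mp : MeasurePreserving (fun y : ℝ => c - y) volume volume :=
    Measure.measurePreserving_sub_left volume c
  have emb : MeasurableEmbedding (fun y : ℝ => c - y) :=
    (MeasurableEquiv.subLeft c).measurableEmbedding
  calc ∫⁻ y in Icc (0:ℝ) t, R ρ (c - y) ^ m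
      ≤ ∫⁻ y in (fun y : ℝ => c - y) ⁻¹' (Icc (-t) t), R ρ (c - y) ^ m := by
        apply lintegral_mono_set
        intro y hy
        simp only [Set.mem_Icc, Set.mem_preimage] at *
        obtain ⟨h1, h2⟩ := hy
        obtain ⟨h3, h4⟩ := hc
        exact ⟨by linarith, by linarith⟩
    _ = ∫⁻ u in Icc (-t) t, R ρ u ^ m :=
        mp.setLIntegral_comp_preimage_emb emb (fun u => R ρ u ^ m) (Icc (-t) t)

lemma lint_shift_le' {ρ : ℝ → ℝ} (hρ : Measurable ρ) {t c : ℝ} (hc : c ∈ Icc (0:ℝ) t) (m : ℕ) :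
    ∫⁻ y in Icc (0:ℝ) t, R ρ (y - c) ^ m ≤ A ρ t m := by
  have mp : MeasurePreserving (fun y : ℝ => y - c) volume volume :=
    measurePreserving_sub_right volume c
  have emb : MeasurableEmbedding (fun y : ℝ => y - c) :=
    (MeasurableEquiv.subRight c).measurableEmbedding
  calc ∫⁻ y in Icc (0:ℝ) t, R ρ (y - c) ^ m
      ≤ ∫⁻ y in (fun y : ℝ => y - c) ⁻¹' (Icc (-t) t), R ρ (y - c) ^ m := by
        apply lintegral_mono_set
        intro y hy
        simp only [Set.mem_Icc, Set.mem_preimage] at *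
        obtain ⟨h1, h2⟩ := hy
        obtain ⟨h3, h4⟩ := hc
        exact ⟨by linarith, by linarith⟩
    _ = ∫⁻ u in Icc (-t) t, R ρ u ^ m :=
        mp.setLIntegral_comp_preimage_emb emb (fun u => R ρ u ^ m) (Icc (-t) t)

lemma key_bound {ρ : ℝ → ℝ} (hρ : Measurable ρ) {t : ℝ}
    {k : Fin N → ℕ} (S' : Finset (Fin N)) (j : Fin N) (m : Fin N → ℕ)
    (hkj1 : 1 ≤ k j)
    (hkl1 : ∀ l ∈ S', 1 ≤ k l)
    (hmk : (∑ l ∈ S', m l) ≤ k j)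
    (hkj : ∀ l ∈ S', k j ≤ k l)
    (z : Fin N → ℝ) (hz : ∀ l ∈ S', z l ∈ Icc (0:ℝ) t) :
    ∫⁻ y in Icc (0:ℝ) t, ∏ l ∈ S', (if j < l then R ρ (z l - y) else R ρ (y - z l)) ^ m l ≤
      (ENNReal.ofReal t) ^ (1 - ∑ l ∈ S', ((m l:ℝ)/(2*k j) + (m l:ℝ)/(2*k l)))
        * A ρ t (k j) ^ ((∑ l ∈ S', (m l : ℝ))/(2*k j))
        * ∏ l ∈ S', A ρ t (k l) ^ ((m l:ℝ)/(2*k l)) := by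
  classical
  have hkj0 : (0:ℝ) < (k j : ℝ) := by exact_mod_cast hkj1
  set μ0 : Measure ℝ := volume.restrict (Icc (0:ℝ) t) with hμ0
  set g : Fin N → ℝ → ℝ≥0∞ :=
    fun l y => if j < l then R ρ (z l - y) else R ρ (y - z l) with hgdef
  have hgmeas : ∀ l, Measurable (g l) := by
    intro l
    by_cases h : j < l
    · simpa [hgdef, h, Function.comp_def] using (measurable_R hρ).comp (measurable_const.sub measurable_id)
    · simpa [hgdef, h, Function.comp_def] using (measurable_R hρ).comp (measurable_id.sub measurable_const)
  have hgA : ∀ l ∈ S', ∀ κ : ℕ, ∫⁻ y, (g l y) ^ κ ∂μ0 ≤ A ρ t κ := by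
    intro l hl κ
    by_cases h : j < l
    · simpa [hgdef, h] using lint_shift_le hρ (hz l hl) κ
    · simpa [hgdef, h] using lint_shift_le' hρ (hz l hl) κ
  set W : ℝ := ∑ l ∈ S', ((m l:ℝ)/(2*k j) + (m l:ℝ)/(2*k l)) with hWdef
  have hWnn : 0 ≤ W := by
    apply Finset.sum_nonneg
    intro l hl
    have h0 : (0:ℝ) < (k l : ℝ) := by exact_mod_cast hkl1 l hl
    positivity
  have hW1 : W ≤ 1 := by
    have step : W ≤ ∑ l ∈ S', (m l:ℝ)/(k j) := by
      apply Finset.sum_le_sum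
      intro l hl
      have h0 : (0:ℝ) < (k l : ℝ) := by exact_mod_cast hkl1 l hl
      have hle : (k j : ℝ) ≤ (k l : ℝ) := by exact_mod_cast hkj l hl
      have h2 : (m l:ℝ)/(2*k l) ≤ (m l:ℝ)/(2*k j) := by
        apply div_le_div_of_nonneg_left (by positivity) (by positivity)
        linarith
      have h3 : (m l:ℝ)/(2*k j) + (m l:ℝ)/(2*k j) = (m l:ℝ)/(k j) := by
        field_simp
        ring
      linarith
    have step2 : ∑ l ∈ S', (m l:ℝ)/(k j) ≤ 1 := by
      rw [← Finset.sum_div]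
      rw [div_le_one hkj0]
      exact_mod_cast hmk
    linarith
  set T : Finset (Option (Fin N × Bool)) :=
    Finset.insertNone (S' ×ˢ (Finset.univ : Finset Bool)) with hTdef
  set F : Option (Fin N × Bool) → ℝ → ℝ≥0∞ := fun i y =>
    Option.elim i 1 (fun lb => (g lb.1 y) ^ (if lb.2 then k lb.1 else k j)) with hFdef
  set P : Option (Fin N × Bool) → ℝ := fun i =>
    Option.elim i (1 - W) (fun lb => if lb.2 then (m lb.1:ℝ)/(2*k lb.1) else (m lb.1:ℝ)/(2*k j))
    with hPdef
  have hsum : ∑ i ∈ T, P i = 1 := by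
    rw [hTdef, Finset.sum_insertNone, Finset.sum_product]
    simp only [hPdef, Option.elim_none, Option.elim_some]
    have : ∀ l ∈ S', ∑ b : Bool, (if b then (m l:ℝ)/(2*k l) else (m l:ℝ)/(2*k j))
        = (m l:ℝ)/(2*k j) + (m l:ℝ)/(2*k l) := by
      intro l _
      rw [Fintype.sum_bool]
      simp [add_comm]
    rw [Finset.sum_congr rfl this, ← hWdef]
    ring
  have hnn : ∀ i ∈ T, 0 ≤ P i := by
    intro i hi
    rcases i with _ | ⟨l, b⟩
    · simpa [hPdef] using by linarith
    · have hl : l ∈ S' := by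
        rw [hTdef, Finset.some_mem_insertNone, Finset.mem_product] at hi
        exact hi.1
      have h0 : (0:ℝ) < (k l : ℝ) := by exact_mod_cast hkl1 l hl
      rcases b with _ | _ <;> simp [hPdef] <;> positivity
  have hFmeas : ∀ i ∈ T, AEMeasurable (F i) μ0 := by
    intro i _
    rcases i with _ | ⟨l, b⟩
    · simpa [hFdef] using aemeasurable_const
    · cases b <;> simpa [hFdef] using ((hgmeas l).pow_const _).aemeasurable
  have hcomb : ∀ (l : Fin N), l ∈ S' → ∀ (x : ℝ≥0∞),
      (x ^ (k l)) ^ ((m l:ℝ)/(2*k l)) * (x ^ (k j)) ^ ((m l:ℝ)/(2*k j)) = x ^ (m l) := by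
    intro l hl x
    have h0 : (0:ℝ) < (k l : ℝ) := by exact_mod_cast hkl1 l hl
    rw [← ENNReal.rpow_natCast x (k l), ← ENNReal.rpow_natCast x (k j),
      ← ENNReal.rpow_mul, ← ENNReal.rpow_mul,
      ← ENNReal.rpow_add_of_nonneg _ _ (by positivity) (by positivity),
      ← ENNReal.rpow_natCast x (m l)]
    congr 1
    field_simp
    ring
  have hpoint : ∀ y : ℝ, ∏ l ∈ S', (g l y) ^ (m l) = ∏ i ∈ T, F i y ^ P i := by
    intro y
    rw [hTdef, Finset.prod_insertNone, Finset.prod_product]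
    simp only [hFdef, hPdef, Option.elim_none, Option.elim_some, ENNReal.one_rpow, one_mul]
    apply Finset.prod_congr rfl
    intro l hl
    rw [Fintype.prod_bool]
    simpa using (hcomb l hl ((g l y))).symm
  calc ∫⁻ y in Icc (0:ℝ) t, ∏ l ∈ S', (if j < l then R ρ (z l - y) else R ρ (y - z l)) ^ m l
      = ∫⁻ y, ∏ i ∈ T, F i y ^ P i ∂μ0 := by
        rw [← hμ0]
        exact lintegral_congr fun y => hpoint y
    _ ≤ ∏ i ∈ T, (∫⁻ y, F i y ∂μ0) ^ P i :=
        ENNReal.lintegral_prod_norm_pow_le T hFmeas hsum hnn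
    _ ≤ (ENNReal.ofReal t) ^ (1 - W) * (A ρ t (k j) ^ ((∑ l ∈ S', (m l : ℝ))/(2*k j))
          * ∏ l ∈ S', A ρ t (k l) ^ ((m l:ℝ)/(2*k l))) := by
        rw [hTdef, Finset.prod_insertNone, Finset.prod_product]
        simp only [hFdef, hPdef, Option.elim_none, Option.elim_some]
        have h1 : ∫⁻ _, (1:ℝ≥0∞) ∂μ0 = ENNReal.ofReal t := by
          rw [lintegral_one, hμ0, Measure.restrict_apply_univ, Real.volume_Icc, sub_zero]
        rw [h1]
        apply mul_le_mul_right
        have hbool : ∀ l ∈ S', ∏ b : Bool,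
            (∫⁻ y, (g l y) ^ (if b then k l else k j) ∂μ0) ^
              (if b then (m l:ℝ)/(2*k l) else (m l:ℝ)/(2*k j))
            ≤ A ρ t (k l) ^ ((m l:ℝ)/(2*k l)) * A ρ t (k j) ^ ((m l:ℝ)/(2*k j)) := by
          intro l hl
          rw [Fintype.prod_bool]
          simp only [if_true, if_false]
          have h0l : (0:ℝ) < (k l : ℝ) := by exact_mod_cast hkl1 l hl
          apply mul_le_mul'
          · exact ENNReal.rpow_le_rpow (hgA l hl (k l)) (by positivity)
          · exact ENNReal.rpow_le_rpow (hgA l hl (k j)) (by positivity)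
        calc ∏ l ∈ S', ∏ b : Bool,
              (∫⁻ y, (g l y) ^ (if b then k l else k j) ∂μ0) ^
                (if b then (m l:ℝ)/(2*k l) else (m l:ℝ)/(2*k j))
            ≤ ∏ l ∈ S', (A ρ t (k l) ^ ((m l:ℝ)/(2*k l)) * A ρ t (k j) ^ ((m l:ℝ)/(2*k j))) :=
              Finset.prod_le_prod' hbool
          _ = (∏ l ∈ S', A ρ t (k l) ^ ((m l:ℝ)/(2*k l))) *
                (∏ l ∈ S', A ρ t (k j) ^ ((m l:ℝ)/(2*k j))) := Finset.prod_mul_distrib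
          _ = A ρ t (k j) ^ ((∑ l ∈ S', (m l : ℝ))/(2*k j))
                * ∏ l ∈ S', A ρ t (k l) ^ ((m l:ℝ)/(2*k l)) := by
              rw [prod_rpow_eq _ _ _ (fun l hl => by positivity), ← Finset.sum_div, mul_comm]
    _ = (ENNReal.ofReal t) ^ (1 - W) * A ρ t (k j) ^ ((∑ l ∈ S', (m l : ℝ))/(2*k j))
          * ∏ l ∈ S', A ρ t (k l) ^ ((m l:ℝ)/(2*k l)) := by rw [mul_assoc]

lemma main_induction {ρ : ℝ → ℝ} (hρ : Measurable ρ) {t : ℝ}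
    {n : Fin N → Fin N → ℕ} (hsymm : ∀ q l, n q l = n l q) (hdiag : ∀ q, n q q = 0)
    {k : Fin N → ℕ} (hk : ∀ l, k l = ∑ q, n l q) (hk1 : ∀ l, 1 ≤ k l)
    (S : Finset (Fin N)) :
    ∀ x, (∫⋯∫⁻_S, FF ρ t n S ∂(fun _ => volume.restrict (Icc (0:ℝ) t))) x
      ≤ ∏ l ∈ S, cst ρ t n k S l := by
  classical
  set μ : Fin N → Measure ℝ := fun _ => volume.restrict (Icc (0:ℝ) t) with hμdef
  induction S using Finset.strongInduction with
  | _ S IH =>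
  rcases S.eq_empty_or_nonempty with rfl | hne
  · intro x; simp [FF, Phi]
  obtain ⟨j, hjS, hjmin⟩ := Finset.exists_min_image S (key k) hne
  set S' := S.erase j with hS'
  have hj' : j ∉ S' := Finset.notMem_erase _ _
  have hSi : S = insert j S' := (Finset.insert_erase hjS).symm
  have hkeylt : ∀ l ∈ S', key k j < key k l := by
    intro l hl
    have h1 : key k j ≤ key k l := hjmin l (Finset.mem_of_mem_erase hl)
    have hne' : j ≠ l := fun h => hj' (by rw [h]; exact hl)
    exact lt_of_le_of_ne h1 (fun h => hne' (key_inj k h))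
  have hkj : ∀ l ∈ S', k j ≤ k l := fun l hl => k_le_of_key_le (le_of_lt (hkeylt l hl))
  -- the inner-step constant
  set C : ℝ≥0∞ := cst ρ t n k S j * ∏ l ∈ S', A ρ t (k l) ^ ((n j l:ℝ)/(2*k l)) with hCdef
  -- factorization of FF S
  have hmerge : ∀ (x : Fin N → ℝ), ∀ l ∈ S',
      (if j < l then R ρ (x l - x j) ^ n j l else 1) *
        (if l < j then R ρ (x j - x l) ^ n l j else 1) =
      (if j < l then R ρ (x l - x j) else R ρ (x j - x l)) ^ n j l := by
    intro x l hl
    have hne' : j ≠ l := fun h => hj' (by rw [h]; exact hl)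
    rcases lt_trichotomy j l with h | h | h
    · rw [if_pos h, if_neg (lt_asymm h), if_pos h, mul_one]
    · exact absurd h hne'
    · rw [if_neg (lt_asymm h), if_pos h, if_neg (not_lt.mpr (le_of_lt h)), one_mul, hsymm]
  have hfac : ∀ x : Fin N → ℝ, FF ρ t n S x = FF ρ t n S' x *
      (Ind t (x j) * ∏ l ∈ S', (if j < l then R ρ (x l - x j) else R ρ (x j - x l)) ^ n j l) := by
    intro x
    simp only [FF, Phi]
    rw [hSi, Finset.prod_insert hj', Finset.prod_insert hj']
    have h1 : ∏ l ∈ insert j S', (if j < l then R ρ (x l - x j) ^ n j l else 1)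
        = ∏ l ∈ S', (if j < l then R ρ (x l - x j) ^ n j l else 1) := by
      rw [Finset.prod_insert hj', if_neg (lt_irrefl j), one_mul]
    have h2 : ∏ q ∈ S', ∏ l ∈ insert j S', (if q < l then R ρ (x l - x q) ^ n q l else 1)
        = (∏ q ∈ S', (if q < j then R ρ (x j - x q) ^ n q j else 1)) *
          ∏ q ∈ S', ∏ l ∈ S', (if q < l then R ρ (x l - x q) ^ n q l else 1) := by
      rw [← Finset.prod_mul_distrib]
      exact Finset.prod_congr rfl fun q hq => by rw [Finset.prod_insert hj']
    rw [h1, h2]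
    have h3 : (∏ l ∈ S', (if j < l then R ρ (x l - x j) ^ n j l else 1)) *
        (∏ q ∈ S', (if q < j then R ρ (x j - x q) ^ n q j else 1))
        = ∏ l ∈ S', (if j < l then R ρ (x l - x j) else R ρ (x j - x l)) ^ n j l := by
      rw [← Finset.prod_mul_distrib]
      exact Finset.prod_congr rfl fun l hl => hmerge x l hl
    calc Ind t (x j) * (∏ l ∈ S', Ind t (x l)) *
          ((∏ l ∈ S', (if j < l then R ρ (x l - x j) ^ n j l else 1)) *
           ((∏ q ∈ S', (if q < j then R ρ (x j - x q) ^ n q j else 1)) *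
            ∏ q ∈ S', ∏ l ∈ S', (if q < l then R ρ (x l - x q) ^ n q l else 1)))
        = ((∏ l ∈ S', Ind t (x l)) *
            ∏ q ∈ S', ∏ l ∈ S', (if q < l then R ρ (x l - x q) ^ n q l else 1)) *
          (Ind t (x j) * ((∏ l ∈ S', (if j < l then R ρ (x l - x j) ^ n j l else 1)) *
           (∏ q ∈ S', (if q < j then R ρ (x j - x q) ^ n q j else 1)))) := by ring
      _ = _ := by rw [h3]
  -- FF S' does not depend on coordinate j
  have hnotdep : ∀ (z : Fin N → ℝ) (y : ℝ),
      FF ρ t n S' (Function.update z j y) = FF ρ t n S' z := by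
    intro z y
    have hupd : ∀ l ∈ S', Function.update z j y l = z l := by
      intro l hl
      exact Function.update_of_ne (fun h => hj' (by rw [← h]; exact hl)) _ _
    simp only [FF, Phi]
    congr 1
    · exact Finset.prod_congr rfl fun l hl => by rw [hupd l hl]
    · refine Finset.prod_congr rfl fun q hq => Finset.prod_congr rfl fun l hl => ?_
      rw [hupd l hl, hupd q hq]
  -- pointwise bound for the inner marginal
  have hptw : ∀ z : Fin N → ℝ,
      (∫⋯∫⁻_{j}, FF ρ t n S ∂μ) z ≤ C * FF ρ t n S' z := by
    intro z
    rw [lmarginal_singleton]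
    set E : ℝ → ℝ≥0∞ :=
      fun y => ∏ l ∈ S', (if j < l then R ρ (z l - y) else R ρ (y - z l)) ^ n j l with hEdef
    have hEmeas : Measurable fun y => Ind t y * E y := by
      apply Measurable.mul measurable_Ind
      apply Finset.measurable_prod
      intro l _
      by_cases h : j < l
      · simp only [if_pos h]
        exact ((measurable_R hρ).comp (measurable_const.sub measurable_id)).pow_const _
      · simp only [if_neg h]
        exact ((measurable_R hρ).comp (measurable_id.sub measurable_const)).pow_const _
    have heval : ∀ y : ℝ, FF ρ t n S (Function.update z j y)
        = FF ρ t n S' z * (Ind t y * E y) := by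
      intro y
      rw [hfac, hnotdep]
      congr 2
      · exact congrArg (Ind t) (Function.update_self j y z)
      · refine Finset.prod_congr rfl fun l hl => ?_
        have hl' : Function.update z j y l = z l :=
          Function.update_of_ne (fun h => hj' (by rw [← h]; exact hl)) _ _
        rw [hl', Function.update_self]
    calc ∫⁻ y, FF ρ t n S (Function.update z j y) ∂μ j
        = ∫⁻ y, FF ρ t n S' z * (Ind t y * E y) ∂μ j :=
          lintegral_congr fun y => heval y
      _ = FF ρ t n S' z * ∫⁻ y, Ind t y * E y ∂μ j := lintegral_const_mul _ hEmeas
      _ ≤ C * FF ρ t n S' z := by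
          by_cases hcase : ∀ l ∈ S', z l ∈ Icc (0:ℝ) t
          · have hind : ∫⁻ y, Ind t y * E y ∂μ j = ∫⁻ y in Icc (0:ℝ) t, E y := by
              refine setLIntegral_congr_fun measurableSet_Icc (fun y hy => ?_)
              rw [Ind, Set.indicator_of_mem hy, one_mul]
            have hmk : (∑ l ∈ S', n j l) ≤ k j := by
              rw [hk j]
              exact Finset.sum_le_sum_of_subset (Finset.subset_univ S')
            have hKB := key_bound hρ S' j (fun l => n j l) (hk1 j)
              (fun l _ => hk1 l) hmk hkj z hcase
            have hCeq : (ENNReal.ofReal t) ^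
                  (1 - ∑ l ∈ S', ((n j l:ℝ)/(2*k j) + (n j l:ℝ)/(2*k l)))
                * A ρ t (k j) ^ ((∑ l ∈ S', ((n j l) : ℝ))/(2*k j))
                * ∏ l ∈ S', A ρ t (k l) ^ ((n j l:ℝ)/(2*k l)) = C := by
              rw [hCdef]
              unfold cst
              have hw : wgt n k S j = ∑ l ∈ S', ((n j l:ℝ)/(2*k j) + (n j l:ℝ)/(2*k l)) := by
                unfold wgt
                rw [hSi, Finset.sum_insert hj', if_neg (lt_irrefl _), zero_add]
                refine Finset.sum_congr rfl fun q hq => ?_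
                rw [if_pos (hkeylt q hq), hsymm q j]
                rw [mul_add, mul_one_div, mul_one_div]
              have hD : ((Dd n S j : ℕ) : ℝ) = ∑ l ∈ S', ((n j l) : ℝ) := by
                unfold Dd
                rw [hSi, Finset.sum_insert hj', hdiag j, zero_add]
                rw [Nat.cast_sum]
                exact Finset.sum_congr rfl fun q hq => by rw [hsymm q j]
              rw [hw, hD]
            rw [hind]
            rw [mul_comm C (FF ρ t n S' z)]
            apply mul_le_mul_right
            rw [← hCeq]
            exact hKB
          · push_neg at hcase
            obtain ⟨l0, hl0S, hl0⟩ := hcase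
            have hFF0 : FF ρ t n S' z = 0 := by
              simp only [FF]
              have : ∏ l ∈ S', Ind t (z l) = 0 := by
                apply Finset.prod_eq_zero hl0S
                rw [Ind, Set.indicator_of_notMem hl0]
              rw [this, zero_mul]
            rw [hFF0, zero_mul, mul_zero]
  -- assemble
  intro x
  have hmeasS : Measurable (FF ρ t n S) := measurable_FF hρ t n S
  have hdisj : Disjoint S' ({j} : Finset (Fin N)) := Finset.disjoint_singleton_right.mpr hj'
  have hU : S = S' ∪ {j} := by rw [hSi, Finset.insert_eq, Finset.union_comm]
  have hstep1 : (∫⋯∫⁻_S, FF ρ t n S ∂μ) x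
      = (∫⋯∫⁻_S', (∫⋯∫⁻_{j}, FF ρ t n S ∂μ) ∂μ) x := by
    have hre : (∫⋯∫⁻_S, FF ρ t n S ∂μ) = (∫⋯∫⁻_S' ∪ {j}, FF ρ t n S ∂μ) := by rw [← hU]
    rw [hre, lmarginal_union μ _ hmeasS hdisj]
  have hstep2 : (∫⋯∫⁻_S', (∫⋯∫⁻_{j}, FF ρ t n S ∂μ) ∂μ) x
      ≤ (∫⋯∫⁻_S', (fun z => C * FF ρ t n S' z) ∂μ) x :=
    lmarginal_mono (fun z => hptw z) x
  have hstep3 : (∫⋯∫⁻_S', (fun z => C * FF ρ t n S' z) ∂μ) x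
      = C * (∫⋯∫⁻_S', FF ρ t n S' ∂μ) x := by
    simp only [lmarginal]
    exact lintegral_const_mul _ ((measurable_FF hρ t n S').comp measurable_updateFinset)
  have hIH : (∫⋯∫⁻_S', FF ρ t n S' ∂μ) x ≤ ∏ l ∈ S', cst ρ t n k S' l :=
    IH S' (Finset.erase_ssubset hjS) x
  have halg : C * ∏ l ∈ S', cst ρ t n k S' l = ∏ l ∈ S, cst ρ t n k S l := by
    have hcstS' : ∀ l ∈ S', cst ρ t n k S l
        = cst ρ t n k S' l * A ρ t (k l) ^ ((n j l:ℝ)/(2*k l)) := by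
      intro l hl
      unfold cst
      have hw : wgt n k S l = wgt n k S' l := by
        unfold wgt
        rw [hSi, Finset.sum_insert hj', if_neg (not_lt.mpr (le_of_lt (hkeylt l hl))), zero_add]
      have hD : ((Dd n S l : ℕ) : ℝ) = (Dd n S' l : ℝ) + (n j l : ℝ) := by
        unfold Dd
        rw [hSi, Finset.sum_insert hj']
        push_cast
        ring
      have hnn1 : (0:ℝ) ≤ (Dd n S' l : ℝ)/(2*k l) := by positivity
      have hnn2 : (0:ℝ) ≤ (n j l : ℝ)/(2*k l) := by positivity
      rw [hw, hD, add_div, ENNReal.rpow_add_of_nonneg _ _ hnn1 hnn2, mul_assoc]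
    calc C * ∏ l ∈ S', cst ρ t n k S' l
        = cst ρ t n k S j * ((∏ l ∈ S', cst ρ t n k S' l) *
            ∏ l ∈ S', A ρ t (k l) ^ ((n j l:ℝ)/(2*k l))) := by rw [hCdef]; ring
      _ = cst ρ t n k S j * ∏ l ∈ S', (cst ρ t n k S' l * A ρ t (k l) ^ ((n j l:ℝ)/(2*k l))) := by
          rw [Finset.prod_mul_distrib]
      _ = cst ρ t n k S j * ∏ l ∈ S', cst ρ t n k S l := by
          rw [Finset.prod_congr rfl hcstS']
      _ = ∏ l ∈ S, cst ρ t n k S l := by rw [hSi, Finset.prod_insert hj']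
  calc (∫⋯∫⁻_S, FF ρ t n S ∂μ) x ≤ C * (∫⋯∫⁻_S', FF ρ t n S' ∂μ) x := by
        rw [hstep1, ← hstep3]; exact hstep2
    _ ≤ C * ∏ l ∈ S', cst ρ t n k S' l := mul_le_mul_right hIH C
    _ = ∏ l ∈ S, cst ρ t n k S l := halg

lemma Dd_univ {n : Fin N → Fin N → ℕ} (hsymm : ∀ q l, n q l = n l q)
    {k : Fin N → ℕ} (hk : ∀ l, k l = ∑ q, n l q) (l : Fin N) :
    Dd n Finset.univ l = k l := by
  unfold Dd
  rw [hk l]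
  exact Finset.sum_congr rfl fun q _ => hsymm q l

lemma wgt_le_one {n : Fin N → Fin N → ℕ} (hsymm : ∀ q l, n q l = n l q)
    {k : Fin N → ℕ} (hk : ∀ l, k l = ∑ q, n l q) (hk1 : ∀ l, 1 ≤ k l) (l : Fin N) :
    wgt n k Finset.univ l ≤ 1 := by
  have hkl0 : (0:ℝ) < (k l : ℝ) := by exact_mod_cast hk1 l
  have step : wgt n k Finset.univ l ≤ ∑ q : Fin N, (n q l : ℝ)/(k l) := by
    unfold wgt
    apply Finset.sum_le_sum
    intro q _
    by_cases h : key k l < key k q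
    · rw [if_pos h]
      have hkq : k l ≤ k q := k_le_of_key_le (le_of_lt h)
      have hkq0 : (0:ℝ) < (k q : ℝ) := by
        have := hk1 q; exact_mod_cast this
      have h1 : 1/(2*(k q:ℝ)) ≤ 1/(2*(k l:ℝ)) := by
        apply div_le_div_of_nonneg_left (by norm_num) (by positivity)
        have : (k l : ℝ) ≤ (k q : ℝ) := by exact_mod_cast hkq
        linarith
      have h2 : (n q l : ℝ) * (1/(2*k l) + 1/(2*k q)) ≤ (n q l : ℝ) * (1/(2*k l) + 1/(2*k l)) := by
        apply mul_le_mul_of_nonneg_left _ (by positivity)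
        linarith
      have h3 : (n q l : ℝ) * (1/(2*k l) + 1/(2*k l)) = (n q l : ℝ)/(k l) := by
        field_simp
        ring
      linarith
    · rw [if_neg h]
      positivity
  have step2 : ∑ q : Fin N, (n q l : ℝ)/(k l) = 1 := by
    rw [← Finset.sum_div]
    have : ∑ q : Fin N, (n q l : ℝ) = (k l : ℝ) := by
      rw [hk l]
      push_cast
      exact Finset.sum_congr rfl fun q _ => by rw [hsymm q l]
    rw [this]
    field_simp
  linarith

lemma sum_wgt {n : Fin N → Fin N → ℕ} (hsymm : ∀ q l, n q l = n l q) (hdiag : ∀ q, n q q = 0)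
    {k : Fin N → ℕ} (hk : ∀ l, k l = ∑ q, n l q) (hk1 : ∀ l, 1 ≤ k l) :
    ∑ l : Fin N, wgt n k Finset.univ l = (N : ℝ)/2 := by
  classical
  set x : Fin N → ℝ := fun l => 1/(2*(k l:ℝ)) with hxdef
  set F : Fin N → Fin N → ℝ :=
    fun l q => if key k l < key k q then (n q l : ℝ) * (x l + x q) else 0 with hFdef
  set G : Fin N → Fin N → ℝ :=
    fun l q => if key k q < key k l then (n q l : ℝ) * (x l + x q) else 0 with hGdef
  have hT : ∑ l : Fin N, wgt n k Finset.univ l = ∑ l : Fin N, ∑ q : Fin N, F l q := rfl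
  have hGF : ∀ l q, G l q = F q l := by
    intro l q
    simp only [hFdef, hGdef]
    by_cases h : key k q < key k l
    · rw [if_pos h, if_pos h, hsymm q l, add_comm]
    · rw [if_neg h, if_neg h]
  have hTG : ∑ l : Fin N, ∑ q : Fin N, G l q = ∑ l : Fin N, ∑ q : Fin N, F l q := by
    rw [Finset.sum_congr rfl fun l (_ : l ∈ Finset.univ) =>
      Finset.sum_congr rfl fun q _ => hGF l q]
    exact Finset.sum_comm
  have hFG : ∀ l q : Fin N, F l q + G l q = (n q l : ℝ) * (x l + x q) := by
    intro l q
    simp only [hFdef, hGdef]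
    rcases lt_trichotomy (key k l) (key k q) with h | h | h
    · rw [if_pos h, if_neg (lt_asymm h), add_zero]
    · have heq : l = q := key_inj k h
      subst heq
      simp [hdiag l]
    · rw [if_neg (lt_asymm h), if_pos h, zero_add]
  have hsum2 : ∑ l : Fin N, ∑ q : Fin N, (n q l : ℝ) * (x l + x q) = (N : ℝ) := by
    have expand : ∀ l q : Fin N, (n q l : ℝ) * (x l + x q)
        = (n q l : ℝ) * x l + (n q l : ℝ) * x q := fun l q => mul_add _ _ _
    simp_rw [expand, Finset.sum_add_distrib]
    have hpart1 : ∑ l : Fin N, ∑ q : Fin N, (n q l : ℝ) * x l = (N : ℝ)/2 := by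
      have : ∀ l : Fin N, ∑ q : Fin N, (n q l : ℝ) * x l = 1/2 := by
        intro l
        rw [← Finset.sum_mul]
        have h1 : ∑ q : Fin N, (n q l : ℝ) = (k l : ℝ) := by
          rw [hk l]; push_cast
          exact Finset.sum_congr rfl fun q _ => by rw [hsymm q l]
        rw [h1, hxdef]
        have hkl0 : (0:ℝ) < (k l : ℝ) := by exact_mod_cast hk1 l
        field_simp
      rw [Finset.sum_congr rfl fun l _ => this l, Finset.sum_const, Finset.card_univ,
        Fintype.card_fin]
      simp [nsmul_eq_mul]
      ring
    have hpart2 : ∑ l : Fin N, ∑ q : Fin N, (n q l : ℝ) * x q = (N : ℝ)/2 := by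
      rw [Finset.sum_comm]
      have : ∀ q : Fin N, ∑ l : Fin N, (n q l : ℝ) * x q = 1/2 := by
        intro q
        rw [← Finset.sum_mul]
        have h1 : ∑ l : Fin N, (n q l : ℝ) = (k q : ℝ) := by
          rw [hk q]; push_cast; rfl
        rw [h1, hxdef]
        have hkq0 : (0:ℝ) < (k q : ℝ) := by exact_mod_cast hk1 q
        field_simp
      rw [Finset.sum_congr rfl fun q _ => this q, Finset.sum_const, Finset.card_univ,
        Fintype.card_fin]
      simp [nsmul_eq_mul]
      ring
    rw [hpart1, hpart2]
    ring
  have h2T : (∑ l : Fin N, ∑ q : Fin N, F l q) + (∑ l : Fin N, ∑ q : Fin N, F l q) = (N:ℝ) := by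
    nth_rewrite 2 [← hTG]
    rw [← hsum2]
    rw [← Finset.sum_add_distrib]
    apply Finset.sum_congr rfl
    intro l _
    rw [← Finset.sum_add_distrib]
    exact Finset.sum_congr rfl fun q _ => hFG l q
  rw [hT]
  linarith

end GraphEstimate

open GraphEstimate

/-- The graph-integral estimate: for a graph on `2p` nodes with `n(q,l)` edges
between nodes `q` and `l` (no self-loops) and `k_l` edges at node `l`,
`∫_{[0,t]^{2p}} ∏_{q<l} |ρ(s_l − s_q)|^{n(q,l)} ds ≤ ∏_l (2t ∫_{−t}^t |ρ|^{k_l})^{1/2}`. -/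
theorem graph_integral_estimate
    (p : ℕ) (hp : 1 ≤ p) (t : ℝ) (ht : 0 < t) (ρ : ℝ → ℝ) (hρ : Measurable ρ)
    (n : Fin (2*p) → Fin (2*p) → ℕ)
    (hsymm : ∀ q l, n q l = n l q) (hdiag : ∀ q, n q q = 0)
    (k : Fin (2*p) → ℕ) (hk : ∀ l, k l = ∑ q, n l q) (hk1 : ∀ l, 1 ≤ k l)
    (hint : ∀ l, (∫⁻ u in Set.Icc (-t) t, (ENNReal.ofReal |ρ u|) ^ (k l)) < ⊤) :
    (∫⁻ x in Set.pi Set.univ (fun _ : Fin (2*p) => Set.Icc (0:ℝ) t),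
        ∏ q, ∏ l, if q < l then (ENNReal.ofReal |ρ (x l - x q)|) ^ (n q l) else 1) ≤
      ∏ l, (2 * ENNReal.ofReal t *
        ∫⁻ u in Set.Icc (-t) t, (ENNReal.ofReal |ρ u|) ^ (k l)) ^ ((1:ℝ)/2) := by
  classical
  set μ : Fin (2*p) → Measure ℝ := fun _ => volume.restrict (Set.Icc (0:ℝ) t) with hμ
  have hbox : (volume : Measure (Fin (2*p) → ℝ)).restrict
      (Set.pi Set.univ fun _ => Set.Icc (0:ℝ) t) = Measure.pi μ := by
    refine (Measure.pi_eq (μ := μ) fun s hs => ?_).symm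
    rw [Measure.restrict_apply (MeasurableSet.univ_pi hs)]
    have hinter : Set.pi Set.univ s ∩ Set.pi Set.univ (fun _ => Set.Icc (0:ℝ) t)
        = Set.pi Set.univ (fun i => s i ∩ Set.Icc (0:ℝ) t) := by
      rw [← Set.pi_inter_distrib]
    rw [hinter, volume_pi_pi]
    exact Finset.prod_congr rfl fun i _ => (Measure.restrict_apply (hs i)).symm
  have hPhiFF : ∫⁻ x, Phi ρ n Finset.univ x ∂(Measure.pi μ)
      = ∫⁻ x, FF ρ t n Finset.univ x ∂(Measure.pi μ) := by
    apply lintegral_congr_ae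
    have hmem : ∀ᵐ x ∂(Measure.pi μ),
        x ∈ (Set.pi Set.univ fun _ : Fin (2*p) => Set.Icc (0:ℝ) t) := by
      rw [← hbox]
      exact ae_restrict_mem (MeasurableSet.univ_pi fun _ => measurableSet_Icc)
    filter_upwards [hmem] with x hx
    have h1 : ∏ l : Fin (2*p), Ind t (x l) = 1 := by
      apply Finset.prod_eq_one
      intro l _
      rw [Ind, Set.indicator_of_mem (hx l (Set.mem_univ l))]
    show Phi ρ n Finset.univ x = FF ρ t n Finset.univ x
    rw [FF, h1, one_mul]
  have hlm : ∫⁻ x, FF ρ t n Finset.univ x ∂(Measure.pi μ)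
      = (∫⋯∫⁻_Finset.univ, FF ρ t n Finset.univ ∂μ) (fun _ => 0) :=
    lintegral_eq_lmarginal_univ (μ := μ) (f := FF ρ t n Finset.univ) (fun _ => 0)
  have hmain : (∫⋯∫⁻_Finset.univ, FF ρ t n Finset.univ ∂μ) (fun _ => 0)
      ≤ ∏ l, cst ρ t n k Finset.univ l :=
    main_induction hρ hsymm hdiag hk hk1 Finset.univ (fun _ => 0)
  have hfin : ∏ l, cst ρ t n k Finset.univ l
      ≤ ∏ l : Fin (2*p), (2 * ENNReal.ofReal t * A ρ t (k l)) ^ ((1:ℝ)/2) := by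
    have h12 : ∀ l : Fin (2*p), ((Dd n Finset.univ l : ℕ):ℝ)/(2*(k l:ℝ)) = (1:ℝ)/2 := by
      intro l
      rw [Dd_univ hsymm hk l]
      have hkl0 : (0:ℝ) < (k l:ℝ) := by exact_mod_cast hk1 l
      field_simp
    calc ∏ l, cst ρ t n k Finset.univ l
        = (∏ l : Fin (2*p), (ENNReal.ofReal t) ^ (1 - wgt n k Finset.univ l)) *
            ∏ l : Fin (2*p), A ρ t (k l) ^ ((1:ℝ)/2) := by
          rw [← Finset.prod_mul_distrib]
          exact Finset.prod_congr rfl fun l _ => by rw [cst, h12 l]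
      _ = (ENNReal.ofReal t) ^ ((p:ℝ)) * ∏ l : Fin (2*p), A ρ t (k l) ^ ((1:ℝ)/2) := by
          rw [prod_rpow_eq _ _ _ (fun l _ => by linarith [wgt_le_one hsymm hk hk1 l])]
          congr 2
          rw [Finset.sum_sub_distrib, sum_wgt hsymm hdiag hk hk1, Finset.sum_const,
            Finset.card_univ, Fintype.card_fin, nsmul_eq_mul]
          push_cast
          ring
      _ ≤ ((2:ℝ≥0∞) * ENNReal.ofReal t) ^ ((p:ℝ)) *
            ∏ l : Fin (2*p), A ρ t (k l) ^ ((1:ℝ)/2) := by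
          apply mul_le_mul_left
          apply ENNReal.rpow_le_rpow _ (by positivity)
          nth_rewrite 1 [← one_mul (ENNReal.ofReal t)]
          exact mul_le_mul_left one_le_two _
      _ = (∏ l : Fin (2*p), ((2:ℝ≥0∞) * ENNReal.ofReal t) ^ ((1:ℝ)/2)) *
            ∏ l : Fin (2*p), A ρ t (k l) ^ ((1:ℝ)/2) := by
          rw [prod_rpow_eq _ _ _ (fun _ _ => by norm_num), Finset.sum_const,
            Finset.card_univ, Fintype.card_fin, nsmul_eq_mul]
          congr 2
          push_cast
          ring
      _ = ∏ l : Fin (2*p), (2 * ENNReal.ofReal t * A ρ t (k l)) ^ ((1:ℝ)/2) := by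
          rw [← Finset.prod_mul_distrib]
          exact Finset.prod_congr rfl fun l _ =>
            (ENNReal.mul_rpow_of_nonneg _ _ (by norm_num)).symm
  calc (∫⁻ x in Set.pi Set.univ (fun _ : Fin (2*p) => Set.Icc (0:ℝ) t),
        ∏ q, ∏ l, if q < l then (ENNReal.ofReal |ρ (x l - x q)|) ^ (n q l) else 1)
      = ∫⁻ x, Phi ρ n Finset.univ x ∂(Measure.pi μ) := by rw [hbox]; rfl
    _ = (∫⋯∫⁻_Finset.univ, FF ρ t n Finset.univ ∂μ) (fun _ => 0) := by rw [hPhiFF, hlm]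
    _ ≤ ∏ l, cst ρ t n k Finset.univ l := hmain
    _ ≤ ∏ l : Fin (2*p), (2 * ENNReal.ofReal t * A ρ t (k l)) ^ ((1:ℝ)/2) := hfin
    _ = ∏ l, (2 * ENNReal.ofReal t *
          ∫⁻ u in Set.Icc (-t) t, (ENNReal.ofReal |ρ u|) ^ (k l)) ^ ((1:ℝ)/2) := rfl
end

section
/- Let m ∈ ℕ, let a, b ∈ ℝ with a² + b² = 1, and let x, y ∈ ℝ. Then H_m(a x + b y) = Σ_{j=0}^{m} (m choose j) a^{j} b^{m−j} H_{j}(x) H_{m−j}(y). -/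
open Polynomial Finset

lemma deriv_hermite' (n : ℕ) :
    derivative (hermite (n+1)) = (n+1 : ℤ[X]) * hermite n := by
  induction n with
  | zero => simp [hermite_one, hermite_zero]
  | succ n ih =>
    rw [hermite_succ (n+1)]
    rw [derivative_sub, derivative_mul, derivative_X, one_mul, ih]
    rw [derivative_mul]
    rw [hermite_succ n]
    push_cast
    ring_nf
    simp [derivative_natCast]

/-- The `m`-th probabilists' Hermite polynomial, as a function on `ℝ`. -/
noncomputable def Hm (m : ℕ) (x : ℝ) : ℝ := Polynomial.aeval x (Polynomial.hermite m)

lemma Hm_zero (t : ℝ) : Hm 0 t = 1 := by simp [Hm, hermite_zero]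

lemma Hm_one (t : ℝ) : Hm 1 t = t := by simp [Hm, hermite_one]

lemma Hm_rec (n : ℕ) (t : ℝ) : Hm (n+2) t = t * Hm (n+1) t - ((n:ℝ)+1) * Hm n t := by
  unfold Hm
  rw [hermite_succ (n+1), map_sub, map_mul, aeval_X, deriv_hermite', map_mul]
  simp

open Finset

lemma step_lemma (a b x y : ℝ) (hab : a^2 + b^2 = 1) (f g : ℕ → ℝ)
    (hf0 : f 0 = 1) (hg0 : g 0 = 1) (hf1 : f 1 = x) (hg1 : g 1 = y)
    (hf : ∀ k, f (k+2) = x * f (k+1) - ((k:ℝ)+1) * f k)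
    (hg : ∀ k, g (k+2) = y * g (k+1) - ((k:ℝ)+1) * g k) (n : ℕ) :
    (a*x+b*y) * (∑ j ∈ range (n+2), ((n+1).choose j : ℝ) * a^j * b^(n+1-j) * f j * g (n+1-j))
      - ((n:ℝ)+1) * (∑ j ∈ range (n+1), (n.choose j : ℝ) * a^j * b^(n-j) * f j * g (n-j))
    = ∑ j ∈ range (n+3), ((n+2).choose j : ℝ) * a^j * b^(n+2-j) * f j * g (n+2-j) := by
  have h1 : a*x*(∑ j ∈ range (n+2), ((n+1).choose j : ℝ) * a^j * b^(n+1-j) * f j * g (n+1-j))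
      = a * b^(n+1) * f 1 * g (n+1)
        + (∑ k ∈ range (n+1), ((n+1).choose (k+1) : ℝ) * a^(k+2) * b^(n-k) * f (k+2) * g (n-k))
        + (∑ k ∈ range (n+1), ((k:ℝ)+1) * ((n+1).choose (k+1) : ℝ) * a^(k+2) * b^(n-k) * f k * g (n-k)) := by
    rw [Finset.mul_sum, Finset.sum_range_succ']
    have e : ∀ k ∈ range (n+1),
        a*x*(((n+1).choose (k+1) : ℝ) * a^(k+1) * b^(n+1-(k+1)) * f (k+1) * g (n+1-(k+1)))
        = ((n+1).choose (k+1) : ℝ) * a^(k+2) * b^(n-k) * f (k+2) * g (n-k)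
          + ((k:ℝ)+1) * ((n+1).choose (k+1) : ℝ) * a^(k+2) * b^(n-k) * f k * g (n-k) := by
      intro k hk
      have hsub : n+1-(k+1) = n-k := by omega
      rw [hsub]
      have hx : x * f (k+1) = f (k+2) + ((k:ℝ)+1) * f k := by rw [hf k]; ring
      linear_combination (((n+1).choose (k+1) : ℝ) * a^(k+2) * b^(n-k) * g (n-k)) * hx
    rw [Finset.sum_congr rfl e, Finset.sum_add_distrib]
    simp only [Nat.choose_zero_right, Nat.cast_one, pow_zero, Nat.sub_zero, hf0, hf1]
    ring
  have h2 : b*y*(∑ j ∈ range (n+2), ((n+1).choose j : ℝ) * a^j * b^(n+1-j) * f j * g (n+1-j))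
      = a^(n+1) * b * f (n+1) * g 1
        + (∑ k ∈ range (n+1), ((n+1).choose k : ℝ) * a^k * b^(n+2-k) * f k * g (n+2-k))
        + (∑ k ∈ range (n+1), ((n:ℝ)+1-(k:ℝ)) * ((n+1).choose k : ℝ) * a^k * b^(n+2-k) * f k * g (n-k)) := by
    rw [Finset.mul_sum, Finset.sum_range_succ]
    have e : ∀ k ∈ range (n+1),
        b*y*(((n+1).choose k : ℝ) * a^k * b^(n+1-k) * f k * g (n+1-k))
        = ((n+1).choose k : ℝ) * a^k * b^(n+2-k) * f k * g (n+2-k)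
          + ((n:ℝ)+1-(k:ℝ)) * ((n+1).choose k : ℝ) * a^k * b^(n+2-k) * f k * g (n-k) := by
      intro k hk
      rw [Finset.mem_range] at hk
      have hk' : k ≤ n := by omega
      have e1 : n+1-k = (n-k)+1 := by omega
      have e2 : n+2-k = (n-k)+2 := by omega
      rw [e1, e2]
      have hy : y * g ((n-k)+1) = g ((n-k)+2) + ((n:ℝ)-(k:ℝ)+1) * g (n-k) := by
        rw [hg (n-k), Nat.cast_sub hk']; ring
      linear_combination (((n+1).choose k : ℝ) * a^k * b^((n-k)+2) * f k) * hy
    rw [Finset.sum_congr rfl e, Finset.sum_add_distrib]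
    simp only [Nat.choose_self, Nat.cast_one, Nat.sub_self, pow_zero, hg0, hg1]
    ring
  have h3 : (∑ k ∈ range (n+1), ((k:ℝ)+1) * ((n+1).choose (k+1) : ℝ) * a^(k+2) * b^(n-k) * f k * g (n-k))
      + (∑ k ∈ range (n+1), ((n:ℝ)+1-(k:ℝ)) * ((n+1).choose k : ℝ) * a^k * b^(n+2-k) * f k * g (n-k))
      = ((n:ℝ)+1) * (∑ j ∈ range (n+1), (n.choose j : ℝ) * a^j * b^(n-j) * f j * g (n-j)) := by
    rw [← Finset.sum_add_distrib, Finset.mul_sum]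
    refine Finset.sum_congr rfl ?_
    intro k hk
    rw [Finset.mem_range] at hk
    have hk' : k ≤ n := by omega
    have c1 : ((k:ℝ)+1) * ((n+1).choose (k+1) : ℝ) = ((n:ℝ)+1) * (n.choose k : ℝ) := by
      have hnat : (k+1) * ((n+1).choose (k+1)) = (n+1) * (n.choose k) := by
        rw [mul_comm]
        exact (Nat.add_one_mul_choose_eq n k).symm
      exact_mod_cast hnat
    have c2 : ((n:ℝ)+1-(k:ℝ)) * ((n+1).choose k : ℝ) = ((n:ℝ)+1) * (n.choose k : ℝ) := by
      have hnat : (n.choose k) * (n+1) = ((n+1).choose k) * (n+1-k) := Nat.choose_mul_succ_eq n k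
      have hc := congrArg (Nat.cast : ℕ → ℝ) hnat
      push_cast [Nat.cast_sub (by omega : k ≤ n+1)] at hc
      linarith [hc]
    rw [c1, c2]
    have e2 : n+2-k = (n-k)+2 := by omega
    rw [e2]
    linear_combination (((n:ℝ)+1) * (n.choose k : ℝ) * a^k * b^(n-k) * f k * g (n-k)) * hab
  have h4 : (∑ j ∈ range (n+3), ((n+2).choose j : ℝ) * a^j * b^(n+2-j) * f j * g (n+2-j))
      = (∑ k ∈ range (n+1), ((n+1).choose (k+1) : ℝ) * a^(k+2) * b^(n-k) * f (k+2) * g (n-k))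
        + (∑ k ∈ range (n+1), ((n+1).choose k : ℝ) * a^k * b^(n+2-k) * f k * g (n+2-k))
        + a * b^(n+1) * f 1 * g (n+1) + a^(n+1) * b * f (n+1) * g 1 := by
    rw [Finset.sum_range_succ']
    have e : ∀ i ∈ range (n+2),
        ((n+2).choose (i+1) : ℝ) * a^(i+1) * b^(n+2-(i+1)) * f (i+1) * g (n+2-(i+1))
        = ((n+1).choose i : ℝ) * a^(i+1) * b^(n+1-i) * f (i+1) * g (n+1-i)
          + ((n+1).choose (i+1) : ℝ) * a^(i+1) * b^(n+1-i) * f (i+1) * g (n+1-i) := by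
      intro i _
      have hs : n+2-(i+1) = n+1-i := by omega
      rw [hs, Nat.choose_succ_succ (n+1) i]
      push_cast
      ring
    rw [Finset.sum_congr rfl e, Finset.sum_add_distrib]
    have hU1 : (∑ i ∈ range (n+2), ((n+1).choose i : ℝ) * a^(i+1) * b^(n+1-i) * f (i+1) * g (n+1-i))
        = (∑ k ∈ range (n+1), ((n+1).choose (k+1) : ℝ) * a^(k+2) * b^(n-k) * f (k+2) * g (n-k))
          + a * b^(n+1) * f 1 * g (n+1) := by
      rw [Finset.sum_range_succ']
      congr 1
      · refine Finset.sum_congr rfl ?_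
        intro k _
        have hs : n+1-(k+1) = n-k := by omega
        rw [hs]
      · simp
    have hU2 : (∑ i ∈ range (n+2), ((n+1).choose (i+1) : ℝ) * a^(i+1) * b^(n+1-i) * f (i+1) * g (n+1-i))
        = (∑ k ∈ range (n+1), ((n+1).choose (k+1) : ℝ) * a^(k+1) * b^(n+1-k) * f (k+1) * g (n+1-k)) := by
      rw [Finset.sum_range_succ]
      simp [Nat.choose_succ_self]
    have hT3 : (∑ k ∈ range (n+1), ((n+1).choose k : ℝ) * a^k * b^(n+2-k) * f k * g (n+2-k))
        = (∑ k ∈ range (n+1), ((n+1).choose (k+1) : ℝ) * a^(k+1) * b^(n+1-k) * f (k+1) * g (n+1-k))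
          - a^(n+1) * b * f (n+1) * g 1 + b^(n+2) * f 0 * g (n+2) := by
      rw [Finset.sum_range_succ' _ n]
      rw [Finset.sum_range_succ _ n]
      have e' : ∀ k ∈ range n,
          ((n+1).choose (k+1) : ℝ) * a^(k+1) * b^(n+2-(k+1)) * f (k+1) * g (n+2-(k+1))
          = ((n+1).choose (k+1) : ℝ) * a^(k+1) * b^(n+1-k) * f (k+1) * g (n+1-k) := by
        intro k _
        have hs : n+2-(k+1) = n+1-k := by omega
        rw [hs]
      rw [Finset.sum_congr rfl e']
      simp only [Nat.choose_self, Nat.choose_zero_right, Nat.cast_one, pow_zero, one_mul,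
        Nat.sub_zero, Nat.add_sub_cancel_left, Nat.succ_sub_succ]
      ring
    rw [hU1, hU2, hT3]
    simp only [Nat.choose_zero_right, Nat.cast_one, pow_zero, Nat.sub_zero, hf0]
    ring
  calc (a*x+b*y) * (∑ j ∈ range (n+2), ((n+1).choose j : ℝ) * a^j * b^(n+1-j) * f j * g (n+1-j))
        - ((n:ℝ)+1) * (∑ j ∈ range (n+1), (n.choose j : ℝ) * a^j * b^(n-j) * f j * g (n-j))
      = a*x*(∑ j ∈ range (n+2), ((n+1).choose j : ℝ) * a^j * b^(n+1-j) * f j * g (n+1-j))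
        + b*y*(∑ j ∈ range (n+2), ((n+1).choose j : ℝ) * a^j * b^(n+1-j) * f j * g (n+1-j))
        - ((n:ℝ)+1) * (∑ j ∈ range (n+1), (n.choose j : ℝ) * a^j * b^(n-j) * f j * g (n-j)) := by ring
    _ = ∑ j ∈ range (n+3), ((n+2).choose j : ℝ) * a^j * b^(n+2-j) * f j * g (n+2-j) := by
        rw [h1, h2, h4]
        linarith [h3]


/-- The addition formula for Hermite polynomials: if `a² + b² = 1`, then
`H_m(ax + by) = Σ_{j=0}^m (m choose j) a^j b^{m−j} H_j(x) H_{m−j}(y)`. -/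
theorem hermite_addition_formula (m : ℕ) (a b x y : ℝ) (hab : a^2 + b^2 = 1) :
    Hm m (a * x + b * y) =
      ∑ j ∈ Finset.range (m+1),
        (m.choose j : ℝ) * a^j * b^(m-j) * Hm j x * Hm (m-j) y := by
  induction m using Nat.strong_induction_on with
  | _ m ih =>
    rcases m with _ | _ | n
    · simp [Hm_zero]
    · rw [Finset.sum_range_succ, Finset.sum_range_one]
      simp [Hm_zero, Hm_one]
      ring
    · have key := step_lemma a b x y hab (fun j => Hm j x) (fun j => Hm j y)
        (Hm_zero x) (Hm_zero y) (Hm_one x) (Hm_one y)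
        (fun k => Hm_rec k x) (fun k => Hm_rec k y) n
      have g2 : Hm (n+2) (a*x+b*y) =
          ∑ j ∈ Finset.range (n+3), ((n+2).choose j : ℝ) * a^j * b^(n+2-j) * Hm j x * Hm (n+2-j) y := by
        rw [Hm_rec n (a*x+b*y), ih (n+1) (by omega), ih n (by omega)]
        exact key
      exact g2
end

section
/- Let X and Z be independent standard Gaussian random variables (law N(0,1)), let c ∈ [−1, 1], and set Y = c X + √(1 − c²) Z. Then for all m, n ∈ ℕ, E[ H_m(X) H_n(Y) ] = m! · c^m if m = n, and E[ H_m(X) H_n(Y) ] = 0 if m ≠ n. -/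
open MeasureTheory ProbabilityTheory Polynomial Real Filter



noncomputable def gpdf (x : ℝ) : ℝ := Real.exp (-(x^2/2))

lemma hasDerivAt_gpdf (x : ℝ) : HasDerivAt gpdf (-x * gpdf x) x := by
  have h1 : HasDerivAt (fun y : ℝ => -(y^2/2)) (-x) x := by
    exact (((hasDerivAt_pow 2 x).div_const 2).neg).congr_deriv (by norm_num)
  have := h1.exp
  unfold gpdf; simpa [mul_comm] using this

lemma integrable_poly_mul_gpdf (p : ℝ[X]) :
    Integrable (fun x => p.eval x * gpdf x) volume := by
  induction p using Polynomial.induction_on' with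
  | add p q hp hq => refine (hp.add hq).congr (ae_of_all _ fun x => ?_); simp [add_mul]
  | monomial n a =>
    have h : Integrable (fun x : ℝ => x ^ (n:ℝ) * Real.exp (-(1/2) * x^2)) volume :=
      integrable_rpow_mul_exp_neg_mul_sq one_half_pos
        (lt_of_lt_of_le (by norm_num) (Nat.cast_nonneg n))
    simp_rw [Real.rpow_natCast] at h
    refine (h.const_mul a).congr (ae_of_all _ fun x => ?_)
    simp only [gpdf, eval_monomial]
    ring_nf

lemma gaussianPDFReal_zero_one (x : ℝ) :
    gaussianPDFReal 0 1 x = (Real.sqrt (2*π))⁻¹ * gpdf x := by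
  simp only [gaussianPDFReal, gpdf, NNReal.coe_one, mul_one, sub_zero, one_div]
  norm_num
  exact Or.inl (by ring)

lemma gaussianReal_eq_withDensity :
    gaussianReal 0 1 = volume.withDensity
      (fun x => ((Real.toNNReal (gaussianPDFReal 0 1 x) : NNReal) : ENNReal)) := by
  rw [gaussianReal_of_var_ne_zero 0 one_ne_zero]
  rfl

lemma integral_gaussianReal_eq (f : ℝ → ℝ) :
    ∫ x, f x ∂(gaussianReal 0 1) = ∫ x, gaussianPDFReal 0 1 x * f x := by
  rw [gaussianReal_eq_withDensity,
    integral_withDensity_eq_integral_smul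
      ((measurable_gaussianPDFReal 0 1).real_toNNReal) f]
  congr 1
  ext x
  simp [NNReal.smul_def, Real.coe_toNNReal _ (gaussianPDFReal_nonneg 0 1 x)]

lemma integrable_gaussianReal_iff (f : ℝ → ℝ) :
    Integrable f (gaussianReal 0 1) ↔
      Integrable (fun x => gaussianPDFReal 0 1 x * f x) volume := by
  rw [gaussianReal_eq_withDensity,
    integrable_withDensity_iff_integrable_smul
      ((measurable_gaussianPDFReal 0 1).real_toNNReal)]
  constructor <;> intro h <;> refine h.congr (ae_of_all _ fun x => ?_) <;>
    simp [NNReal.smul_def, Real.coe_toNNReal _ (gaussianPDFReal_nonneg 0 1 x)]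

lemma integrable_eval_gaussian (p : ℝ[X]) :
    Integrable (fun x => p.eval x) (gaussianReal 0 1) := by
  rw [integrable_gaussianReal_iff]
  refine ((integrable_poly_mul_gpdf p).const_mul ((Real.sqrt (2*π))⁻¹)).congr
    (ae_of_all _ fun x => ?_)
  simp only [gaussianPDFReal_zero_one]; ring

lemma stein (p : ℝ[X]) :
    ∫ x, x * p.eval x ∂(gaussianReal 0 1)
      = ∫ x, (derivative p).eval x ∂(gaussianReal 0 1) := by
  rw [integral_gaussianReal_eq, integral_gaussianReal_eq]
  simp only [gaussianPDFReal_zero_one]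
  have key : ∫ x, p.eval x * (-x * gpdf x) = - ∫ x, (derivative p).eval x * gpdf x := by
    refine integral_mul_deriv_eq_deriv_mul_of_integrable
      (u := fun x => p.eval x) (u' := fun x => (derivative p).eval x)
      (v := gpdf) (v' := fun x => -x * gpdf x)
      (fun x _ => p.hasDerivAt x) (fun x _ => hasDerivAt_gpdf x) ?_ ?_ ?_
    · refine ((integrable_poly_mul_gpdf (X * p)).neg).congr (ae_of_all _ fun x => ?_)
      simp [Pi.mul_apply]; ring
    · exact (integrable_poly_mul_gpdf (derivative p)).congr (ae_of_all _ fun x => rfl)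
    · exact (integrable_poly_mul_gpdf p).congr (ae_of_all _ fun x => rfl)
  have key2 : ∫ x, x * p.eval x * gpdf x = ∫ x, (derivative p).eval x * gpdf x := by
    have := congrArg Neg.neg key
    rw [neg_neg, ← integral_neg] at this
    rw [← this]
    congr 1; ext x; ring
  calc ∫ x, (Real.sqrt (2*π))⁻¹ * gpdf x * (x * p.eval x)
      = (Real.sqrt (2*π))⁻¹ * ∫ x, x * p.eval x * gpdf x := by
        rw [← integral_const_mul]; congr 1; ext x; ring
    _ = (Real.sqrt (2*π))⁻¹ * ∫ x, (derivative p).eval x * gpdf x := by rw [key2]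
    _ = _ := by rw [← integral_const_mul]; congr 1; ext x; ring

noncomputable def hR (n : ℕ) : ℝ[X] := (Polynomial.hermite n).map (Int.castRingHom ℝ)

lemma Hm_eq (m : ℕ) (x : ℝ) : Hm m x = (hR m).eval x := by
  rw [Hm, hR, aeval_def, eval₂_eq_eval_map]
  rfl

lemma hR_zero : hR 0 = 1 := by simp [hR, hermite_zero]

lemma hR_one : hR 1 = X := by simp [hR, hermite_one]

lemma hR_succ (n : ℕ) : hR (n+1) = X * hR n - derivative (hR n) := by
  simp [hR, hermite_succ, Polynomial.map_mul, Polynomial.map_sub, derivative_map]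

lemma derivative_hR (n : ℕ) : derivative (hR (n+1)) = C ((n:ℝ)+1) * hR n := by
  induction n with
  | zero => simp [hR_one, hR_zero]
  | succ n ih =>
    have h3 : derivative (hR n) = X * hR n - hR (n+1) := by rw [hR_succ n]; ring
    have h2 : hR (n+2) = X * hR (n+1) - C ((n:ℝ)+1) * hR n := by rw [hR_succ (n+1), ih]
    rw [h2, derivative_sub, derivative_mul, derivative_X, one_mul, ih,
      derivative_mul, derivative_C, zero_mul, zero_add, h3]
    simp only [map_add, map_one, C_eq_natCast]
    push_cast
    ring

lemma hR_succ_succ (n : ℕ) : hR (n+2) = X * hR (n+1) - C ((n:ℝ)+1) * hR n := by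
  rw [hR_succ (n+1), derivative_hR]

lemma natDegree_hR (n : ℕ) : (hR n).natDegree = n := by
  rw [hR, ((hermite_monic n).natDegree_map _), natDegree_hermite]

lemma integral_hR (k : ℕ) :
    ∫ x, (hR k).eval x ∂(gaussianReal 0 1) = if k = 0 then 1 else 0 := by
  cases k with
  | zero => simp [hR_zero]
  | succ k =>
    rw [if_neg (Nat.succ_ne_zero k)]
    have h1 : (fun x => (hR (k+1)).eval x)
        = fun x => x * (hR k).eval x - (derivative (hR k)).eval x := by
      funext x; rw [hR_succ]; simp
    rw [h1, integral_sub ?_ (integrable_eval_gaussian _)]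
    · rw [stein, sub_self]
    · have := integrable_eval_gaussian (X * hR k)
      refine this.congr (ae_of_all _ fun x => ?_); simp

lemma integral_hR_mul (m : ℕ) : ∀ k : ℕ,
    ∫ x, (hR m).eval x * (hR k).eval x ∂(gaussianReal 0 1)
      = if m = k then (m.factorial : ℝ) else 0 := by
  induction m with
  | zero =>
    intro k
    have h1 : (fun x => (hR 0).eval x * (hR k).eval x) = fun x => (hR k).eval x := by
      funext x; simp [hR_zero]
    rw [h1, integral_hR]
    simp [eq_comm]
  | succ m ih =>
    intro k
    have h1 : (fun x => (hR (m+1)).eval x * (hR k).eval x)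
        = fun x => x * ((hR m) * (hR k)).eval x
            - (derivative (hR m)).eval x * (hR k).eval x := by
      funext x; rw [hR_succ]; simp; ring
    have hint1 : Integrable (fun x => x * ((hR m) * (hR k)).eval x) (gaussianReal 0 1) := by
      refine (integrable_eval_gaussian (X * (hR m * hR k))).congr (ae_of_all _ fun x => ?_)
      simp
    have hint2 : Integrable (fun x => (derivative (hR m)).eval x * (hR k).eval x)
        (gaussianReal 0 1) := by
      refine (integrable_eval_gaussian (derivative (hR m) * hR k)).congr
        (ae_of_all _ fun x => ?_)
      simp
    rw [h1, integral_sub hint1 hint2, stein]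
    have h2 : (fun x => (derivative (hR m * hR k)).eval x)
        = fun x => (derivative (hR m)).eval x * (hR k).eval x
            + (hR m).eval x * (derivative (hR k)).eval x := by
      funext x; rw [derivative_mul]; simp
    rw [h2, integral_add hint2 ?int3]
    case int3 =>
      refine (integrable_eval_gaussian (hR m * derivative (hR k))).congr
        (ae_of_all _ fun x => ?_)
      simp
    rw [add_sub_cancel_left]
    cases k with
    | zero =>
      simp [hR_zero]
    | succ k =>
      have h3 : (fun x => (hR m).eval x * (derivative (hR (k+1))).eval x)
          = fun x => ((k:ℝ)+1) * ((hR m).eval x * (hR k).eval x) := by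
        funext x; rw [derivative_hR]; simp; ring
      rw [h3, integral_const_mul, ih k]
      by_cases hmk : m = k
      · subst hmk
        rw [if_pos rfl, if_pos rfl]
        rw [Nat.factorial_succ]
        push_cast
        ring
      · rw [if_neg hmk, if_neg (by omega), mul_zero]

lemma integral_id_gaussian : ∫ z, z ∂(gaussianReal 0 1) = 0 := by
  have h := stein 1
  simp only [eval_one, mul_one, derivative_one, eval_zero, integral_zero] at h
  exact h

lemma phi (c s : ℝ) (hcs : c^2 + s^2 = 1) :
    ∀ n : ℕ, ∀ x : ℝ, ∫ z, (hR n).eval (c*x + s*z) ∂(gaussianReal 0 1)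
      = c^n * (hR n).eval x := by
  intro n
  induction n using Nat.strong_induction_on with
  | _ n ih =>
    match n with
    | 0 => intro x; simp [hR_zero]
    | 1 =>
      intro x
      rw [hR_one]
      simp only [eval_X]
      have hint : Integrable (fun z => s * z) (gaussianReal 0 1) := by
        refine (integrable_eval_gaussian (C s * X)).congr (ae_of_all _ fun z => ?_); simp
      rw [integral_add (integrable_const _) hint, integral_const, integral_const_mul,
        integral_id_gaussian]
      simp
    | (n+2) =>
      intro x
      set r : ℝ[X] := C (c*x) + C s * X with hr
      have hevr : ∀ z, r.eval z = c*x + s*z := by intro z; simp [hr]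
      have hA : ∀ z, ((hR (n+1)).comp r).eval z = (hR (n+1)).eval (c*x + s*z) := by
        intro z; rw [eval_comp, hevr]
      have hB : ∀ z, ((hR n).comp r).eval z = (hR n).eval (c*x + s*z) := by
        intro z; rw [eval_comp, hevr]
      -- the three integrability facts
      have hintA : Integrable (fun z => (hR (n+1)).eval (c*x+s*z)) (gaussianReal 0 1) :=
        (integrable_eval_gaussian ((hR (n+1)).comp r)).congr (ae_of_all _ fun z => hA z)
      have hintB : Integrable (fun z => (hR n).eval (c*x+s*z)) (gaussianReal 0 1) :=
        (integrable_eval_gaussian ((hR n).comp r)).congr (ae_of_all _ fun z => hB z)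
      have hintzA : Integrable (fun z => z * (hR (n+1)).eval (c*x+s*z)) (gaussianReal 0 1) := by
        refine (integrable_eval_gaussian (X * ((hR (n+1)).comp r))).congr
          (ae_of_all _ fun z => ?_)
        simp only [eval_mul, eval_X, hA]
      -- Stein step: ∫ z * A z = s*(n+1) * ∫ B
      have hstein : ∫ z, z * (hR (n+1)).eval (c*x+s*z) ∂(gaussianReal 0 1)
          = s * (((n:ℝ)+1) * ∫ z, (hR n).eval (c*x+s*z) ∂(gaussianReal 0 1)) := by
        have h1 : ∫ z, z * (hR (n+1)).eval (c*x+s*z) ∂(gaussianReal 0 1)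
            = ∫ z, z * ((hR (n+1)).comp r).eval z ∂(gaussianReal 0 1) := by
          congr 1; funext z; rw [hA]
        rw [h1, stein]
        have h2 : (fun z => (derivative ((hR (n+1)).comp r)).eval z)
            = fun z => s * (((n:ℝ)+1) * (hR n).eval (c*x+s*z)) := by
          funext z
          rw [derivative_comp, derivative_hR]
          simp [hr, hB z, eval_comp, hevr]
        rw [h2, integral_const_mul, integral_const_mul]
      -- expand the recurrence
      have hexp : (fun z => (hR (n+2)).eval (c*x+s*z))
          = fun z => (c*x) * (hR (n+1)).eval (c*x+s*z)
              + s * (z * (hR (n+1)).eval (c*x+s*z))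
              - ((n:ℝ)+1) * (hR n).eval (c*x+s*z) := by
        funext z
        rw [hR_succ_succ]
        simp only [eval_sub, eval_mul, eval_X, eval_C]
        ring
      have hsub : ∫ z, (c*x * (hR (n+1)).eval (c*x+s*z)
              + s * (z * (hR (n+1)).eval (c*x+s*z)))
              - ((n:ℝ)+1) * (hR n).eval (c*x+s*z) ∂(gaussianReal 0 1)
          = (∫ z, c*x * (hR (n+1)).eval (c*x+s*z)
              + s * (z * (hR (n+1)).eval (c*x+s*z)) ∂(gaussianReal 0 1))
            - ∫ z, ((n:ℝ)+1) * (hR n).eval (c*x+s*z) ∂(gaussianReal 0 1) :=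
        integral_sub ((hintA.const_mul (c*x)).add (hintzA.const_mul s))
          (hintB.const_mul ((n:ℝ)+1))
      have hadd : ∫ z, c*x * (hR (n+1)).eval (c*x+s*z)
              + s * (z * (hR (n+1)).eval (c*x+s*z)) ∂(gaussianReal 0 1)
          = (∫ z, c*x * (hR (n+1)).eval (c*x+s*z) ∂(gaussianReal 0 1))
            + ∫ z, s * (z * (hR (n+1)).eval (c*x+s*z)) ∂(gaussianReal 0 1) :=
        integral_add (hintA.const_mul (c*x)) (hintzA.const_mul s)
      rw [hexp, hsub, hadd, integral_const_mul, integral_const_mul, integral_const_mul, hstein,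
        ih (n+1) (by omega) x, ih n (by omega) x]
      rw [hR_succ_succ]
      simp only [eval_sub, eval_mul, eval_X, eval_C]
      linear_combination (((n:ℝ)+1) * c^n * (hR n).eval x) * hcs

lemma integrable_prod_poly (c s : ℝ) (p r : ℝ[X]) :
    Integrable (fun w : ℝ × ℝ => p.eval w.1 * r.eval (c*w.1 + s*w.2))
      ((gaussianReal 0 1).prod (gaussianReal 0 1)) := by
  induction r using Polynomial.induction_on' with
  | add u v hu hv =>
    refine (hu.add hv).congr (ae_of_all _ fun w => ?_)
    simp [eval_add]; ring
  | monomial k a =>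
    have hrw : (fun w : ℝ × ℝ => p.eval w.1 * (monomial k a).eval (c*w.1 + s*w.2))
        = fun w => ∑ j ∈ Finset.range (k+1),
            (a * (k.choose j : ℝ) * c^j * s^(k-j)) * ((p.eval w.1 * w.1^j) * w.2^(k-j)) := by
      funext w
      rw [eval_monomial, add_pow, Finset.mul_sum, Finset.mul_sum]
      refine Finset.sum_congr rfl fun j hj => ?_
      rw [mul_pow, mul_pow]; ring
    rw [hrw]
    refine integrable_finset_sum _ fun j hj => ?_
    have h := ((integrable_eval_gaussian (p * X^j)).mul_prod
      (integrable_eval_gaussian (X^(k-j)))).const_mul (a * (k.choose j : ℝ) * c^j * s^(k-j))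
    refine h.congr (ae_of_all _ fun w => ?_)
    simp [eval_mul, eval_pow]

/-- Orthogonality relation for Hermite polynomials of jointly Gaussian variables:
for standard Gaussians `X ⊥ Z`, `c ∈ [−1,1]` and `Y = cX + √(1−c²)Z`,
`E[H_m(X) H_n(Y)] = δ_{mn} m! c^m`. -/

theorem hermite_orthogonality_correlated
    {Ω : Type*} [MeasurableSpace Ω] (P : Measure Ω) [IsProbabilityMeasure P]
    (X Z : Ω → ℝ) (hX : Measurable X) (hZ : Measurable Z)
    (hindep : IndepFun X Z P)
    (hXlaw : P.map X = gaussianReal 0 1)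
    (hZlaw : P.map Z = gaussianReal 0 1)
    (c : ℝ) (hc : c ∈ Set.Icc (-1:ℝ) 1) (m n : ℕ) :
    (∫ ω, Hm m (X ω) * Hm n (c * X ω + Real.sqrt (1 - c^2) * Z ω) ∂P) =
      if m = n then (m.factorial : ℝ) * c^m else 0 := by
  obtain ⟨hc1, hc2⟩ := hc
  set s := Real.sqrt (1 - c^2) with hs
  have hs2 : s^2 = 1 - c^2 := Real.sq_sqrt (by nlinarith)
  have hcs : c^2 + s^2 = 1 := by rw [hs2]; ring
  have hmap : P.map (fun ω => (X ω, Z ω)) = (gaussianReal 0 1).prod (gaussianReal 0 1) := by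
    rw [(indepFun_iff_map_prod_eq_prod_map_map hX.aemeasurable hZ.aemeasurable).mp hindep,
      hXlaw, hZlaw]
  have hF : Continuous fun w : ℝ × ℝ => (hR m).eval w.1 * (hR n).eval (c*w.1 + s*w.2) := by
    fun_prop
  calc ∫ ω, Hm m (X ω) * Hm n (c * X ω + s * Z ω) ∂P
      = ∫ w : ℝ × ℝ, (hR m).eval w.1 * (hR n).eval (c*w.1 + s*w.2)
          ∂((gaussianReal 0 1).prod (gaussianReal 0 1)) := by
        rw [← hmap, integral_map (hX.aemeasurable.prodMk hZ.aemeasurable)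
          hF.aestronglyMeasurable]
        simp only [Hm_eq]
    _ = ∫ x, ∫ z, (hR m).eval x * (hR n).eval (c*x + s*z)
          ∂(gaussianReal 0 1) ∂(gaussianReal 0 1) :=
        integral_prod _ (integrable_prod_poly c s (hR m) (hR n))
    _ = ∫ x, (hR m).eval x * (c^n * (hR n).eval x) ∂(gaussianReal 0 1) := by
        congr 1; funext x
        rw [integral_const_mul, phi c s hcs n x]
    _ = c^n * ∫ x, (hR m).eval x * (hR n).eval x ∂(gaussianReal 0 1) := by
        rw [← integral_const_mul]; congr 1; funext x; ring
    _ = if m = n then (m.factorial : ℝ) * c^m else 0 := by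
        rw [integral_hR_mul m n]
        by_cases h : m = n
        · subst h; rw [if_pos rfl, if_pos rfl]; ring
        · rw [if_neg h, if_neg h, mul_zero]
end
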